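/- arXiv:2402.18111 — 7 statements merged into one kernel-verified Lean document; each statement's English description precedes it below -/
import Mathlib

section
/- For every real a > 1/2 there exists a constant C_a > 0 such that for all τ > 0, ∫₀^π (2(1 − cos θ) + τ)^{−a} dθ ≤ C_a · min{ τ^{1/2 − a}, τ^{−a} }. -/
open MeasureTheory Real

/-!
Write `K(θ) = 2(1 - cos θ) + τ`. Trivially `K ≥ τ`, which bounds the integral by `π τ^{-a}`, and
Jordan's inequality gives `K(θ) ≥ (4/π²) θ²` on `[0, π]`. Splitting the integral at `s > 0` and using
the first bound on `[0, s]` and the second on `[s, π]` gives `s τ^{-a} + C s^{1-2a}`, because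
`∫_s^∞ θ^{-2a} dθ = s^{1-2a}/(2a-1)` is finite for `2a > 1`; the choice `s = √τ` yields `τ^{1/2-a}`.
-/

lemma integral_rpow_neg_le {p s b : ℝ} (hp : 1 < p) (hs : 0 < s) (hsb : s ≤ b) :
    ∫ θ in s..b, θ ^ (-p) ≤ s ^ (1 - p) / (p - 1) := by
  have hzero : (0 : ℝ) ∉ Set.uIcc s b := by
    rw [Set.uIcc_of_le hsb]
    exact fun h ↦ hs.not_ge h.1
  have hp' : -p + 1 = -(p - 1) := by ring
  rw [integral_rpow (Or.inr ⟨by linarith, hzero⟩), hp', div_neg, ← neg_div, neg_sub,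
    ← hp', neg_add_eq_sub]
  gcongr
  linarith [rpow_nonneg (hs.le.trans hsb) (1 - p)]

lemma mul_sq_le_two_mul_one_sub_cos {θ : ℝ} (hθ : |θ| ≤ π) :
    4 / π ^ 2 * θ ^ 2 ≤ 2 * (1 - cos θ) := by
  have hsq : 4 / π ^ 2 * θ ^ 2 = 2 * (2 / π ^ 2 * θ ^ 2) := by ring
  linarith [cos_le_one_sub_mul_cos_sq hθ]

section Kernel

variable {a τ : ℝ}

lemma two_mul_one_sub_cos_add_pos (hτ : 0 < τ) (θ : ℝ) : 0 < 2 * (1 - cos θ) + τ := by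
  linarith [cos_le_one θ]

lemma intervalIntegrable_kernel (hτ : 0 < τ) (s b : ℝ) :
    IntervalIntegrable (fun θ ↦ (2 * (1 - cos θ) + τ) ^ (-a)) volume s b := by
  refine Continuous.intervalIntegrable ?_ s b
  exact (by fun_prop : Continuous fun θ ↦ 2 * (1 - cos θ) + τ).rpow_const
    fun θ ↦ Or.inl (two_mul_one_sub_cos_add_pos hτ θ).ne'

lemma kernel_le_rpow_neg (ha : 0 ≤ a) (hτ : 0 < τ) (θ : ℝ) :
    (2 * (1 - cos θ) + τ) ^ (-a) ≤ τ ^ (-a) :=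
  rpow_le_rpow_of_nonpos hτ (by linarith [cos_le_one θ]) (by linarith)

lemma kernel_le_mul_rpow (ha : 0 ≤ a) (hτ : 0 ≤ τ) {θ : ℝ} (hθ : 0 < θ) (hθπ : θ ≤ π) :
    (2 * (1 - cos θ) + τ) ^ (-a) ≤ (4 / π ^ 2) ^ (-a) * θ ^ (-(2 * a)) := by
  have hlow : 4 / π ^ 2 * θ ^ 2 ≤ 2 * (1 - cos θ) + τ := by
    linarith [mul_sq_le_two_mul_one_sub_cos (abs_le.2 ⟨by linarith, hθπ⟩)]
  calc (2 * (1 - cos θ) + τ) ^ (-a) ≤ (4 / π ^ 2 * θ ^ 2) ^ (-a) :=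
        rpow_le_rpow_of_nonpos (by positivity) hlow (by linarith)
    _ = (4 / π ^ 2) ^ (-a) * θ ^ (-(2 * a)) := by
        rw [mul_rpow (by positivity) (by positivity), ← rpow_natCast θ 2, ← rpow_mul hθ.le]
        norm_num

lemma integral_kernel_le_mul (ha : 0 ≤ a) (hτ : 0 < τ) {s : ℝ} (hs : 0 ≤ s) :
    ∫ θ in (0 : ℝ)..s, (2 * (1 - cos θ) + τ) ^ (-a) ≤ s * τ ^ (-a) := by
  calc ∫ θ in (0 : ℝ)..s, (2 * (1 - cos θ) + τ) ^ (-a) ≤ ∫ θ in (0 : ℝ)..s, τ ^ (-a) :=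
        intervalIntegral.integral_mono_on hs (intervalIntegrable_kernel hτ 0 s)
          intervalIntegrable_const fun θ _ ↦ kernel_le_rpow_neg ha hτ θ
    _ = s * τ ^ (-a) := by simp

lemma integral_kernel_tail_le (ha : 1 / 2 < a) (hτ : 0 < τ) {s : ℝ} (hs : 0 < s) (hsπ : s ≤ π) :
    ∫ θ in s..π, (2 * (1 - cos θ) + τ) ^ (-a) ≤
      (4 / π ^ 2) ^ (-a) / (2 * a - 1) * s ^ (1 - 2 * a) := by
  have hmajorant : IntervalIntegrable (fun θ ↦ (4 / π ^ 2) ^ (-a) * θ ^ (-(2 * a))) volume s π :=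
    (intervalIntegral.intervalIntegrable_rpow (Or.inr fun h ↦ by
      rw [Set.uIcc_of_le hsπ] at h; exact hs.not_ge h.1)).const_mul _
  calc ∫ θ in s..π, (2 * (1 - cos θ) + τ) ^ (-a)
      ≤ ∫ θ in s..π, (4 / π ^ 2) ^ (-a) * θ ^ (-(2 * a)) :=
        intervalIntegral.integral_mono_on hsπ (intervalIntegrable_kernel hτ s π) hmajorant
          fun θ hθ ↦ kernel_le_mul_rpow (by linarith) hτ.le (hs.trans_le hθ.1) hθ.2
    _ = (4 / π ^ 2) ^ (-a) * ∫ θ in s..π, θ ^ (-(2 * a)) := intervalIntegral.integral_const_mul _ _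
    _ ≤ (4 / π ^ 2) ^ (-a) * (s ^ (1 - 2 * a) / (2 * a - 1)) := by
        gcongr
        exact integral_rpow_neg_le (by linarith) hs hsπ
    _ = (4 / π ^ 2) ^ (-a) / (2 * a - 1) * s ^ (1 - 2 * a) := by ring

lemma integral_kernel_le_add (ha : 1 / 2 < a) (hτ : 0 < τ) {s : ℝ} (hs : 0 < s) :
    ∫ θ in (0 : ℝ)..π, (2 * (1 - cos θ) + τ) ^ (-a) ≤
      s * τ ^ (-a) + (4 / π ^ 2) ^ (-a) / (2 * a - 1) * s ^ (1 - 2 * a) := by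
  have htail : 0 ≤ (4 / π ^ 2) ^ (-a) / (2 * a - 1) * s ^ (1 - 2 * a) := by
    have : 0 < 2 * a - 1 := by linarith
    positivity
  rcases le_or_gt s π with hsπ | hπs
  · rw [← intervalIntegral.integral_add_adjacent_intervals (intervalIntegrable_kernel hτ 0 s)
      (intervalIntegrable_kernel hτ s π)]
    exact add_le_add (integral_kernel_le_mul (by linarith) hτ hs.le)
      (integral_kernel_tail_le ha hτ hs hsπ)
  · calc ∫ θ in (0 : ℝ)..π, (2 * (1 - cos θ) + τ) ^ (-a) ≤ π * τ ^ (-a) :=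
          integral_kernel_le_mul (by linarith) hτ pi_pos.le
      _ ≤ s * τ ^ (-a) := by gcongr
      _ ≤ _ := le_add_of_nonneg_right htail

lemma integral_kernel_le_mul_rpow (ha : 1 / 2 < a) (hτ : 0 < τ) :
    ∫ θ in (0 : ℝ)..π, (2 * (1 - cos θ) + τ) ^ (-a) ≤
      (1 + (4 / π ^ 2) ^ (-a) / (2 * a - 1)) * τ ^ ((1 : ℝ) / 2 - a) := by
  have hhead : τ ^ ((1 : ℝ) / 2) * τ ^ (-a) = τ ^ ((1 : ℝ) / 2 - a) := by
    rw [← rpow_add hτ, sub_eq_add_neg]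
  have htail : (τ ^ ((1 : ℝ) / 2)) ^ (1 - 2 * a) = τ ^ ((1 : ℝ) / 2 - a) := by
    rw [← rpow_mul hτ.le]; ring_nf
  have := integral_kernel_le_add ha hτ (rpow_pos_of_pos hτ ((1 : ℝ) / 2))
  rw [hhead, htail] at this
  linarith

end Kernel

/-- For every real `a > 1/2` there exists a constant `C_a > 0` such that
for all `τ > 0`,
`∫₀^π (2(1 − cos θ) + τ)^{−a} dθ ≤ C_a · min{ τ^{1/2 − a}, τ^{−a} }`. -/
theorem stmt_0 (a : ℝ) (ha : 1 / 2 < a) :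
    ∃ C : ℝ, 0 < C ∧ ∀ τ : ℝ, 0 < τ →
      (∫ θ in (0:ℝ)..Real.pi, (2 * (1 - Real.cos θ) + τ) ^ (-a)) ≤
        C * min (τ ^ ((1:ℝ)/2 - a)) (τ ^ (-a)) := by
  set K := (4 / π ^ 2) ^ (-a) / (2 * a - 1)
  have hK : 0 < K := div_pos (by positivity) (by linarith)
  refine ⟨π + 1 + K, by positivity, fun τ hτ ↦ ?_⟩
  rw [mul_min_of_nonneg _ _ (by positivity)]
  refine le_min ?_ ?_
  · calc _ ≤ (1 + K) * τ ^ ((1 : ℝ) / 2 - a) := integral_kernel_le_mul_rpow ha hτ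
      _ ≤ (π + 1 + K) * τ ^ ((1 : ℝ) / 2 - a) := by gcongr; linarith [pi_pos]
  · calc _ ≤ π * τ ^ (-a) := integral_kernel_le_mul (by linarith) hτ pi_pos.le
      _ ≤ (π + 1 + K) * τ ^ (-a) := by gcongr; linarith
end

section
/- There exists an absolute constant C > 0 such that for all r, s > 0 and all r̄, s̄ ≥ 0 with (r, s) ≠ (r̄, s̄), one has ∫₀^π ∫₀^π r̄ s̄ · X₋₋^{−3/2} dφ̄ dθ̄ ≤ C · min{ (r̄ s̄/(r s))^{1/2}, (s̄/s)^{1/2}, (r̄/r)^{1/2} } · ((r − r̄)² + (s − s̄)²)^{−1/2}. -/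
open MeasureTheory Real

/-- `X₋₋(r,s,r̄,s̄,θ̄,φ̄) = (r−r̄)² + (s−s̄)² + 2rr̄(1−cos θ̄) + 2ss̄(1−cos φ̄)`. -/
noncomputable def Xmm (r s rb sb θ φ : ℝ) : ℝ :=
  (r - rb) ^ 2 + (s - sb) ^ 2 + 2 * r * rb * (1 - Real.cos θ) + 2 * s * sb * (1 - Real.cos φ)

/-!
By Jordan's inequality `1 - cos x ≥ 2x²/π²`, on `[0, π]²` we have
`X₋₋ ≥ D + (αθ)² + (βφ)²` with `D = (r - r̄)² + (s - s̄)²`, `α = 2√(r r̄)/π`, `β = 2√(s s̄)/π`.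
The `φ`-integral of `(E + (βφ)²)^(-3/2)` is at most `1/(βE)` (explicit antiderivative), and
`∫ (D + (αθ)²)⁻¹ dθ ≤ π/(2α√D)` (arctan), giving the bound `√(r̄ s̄/(r s)) / √D`.
If `r̄ ≥ 2r`, bounding the `θ`-integrand by `1/D` and using `r̄ ≤ 2√D` gives `√(s̄/s) / √D`
instead. By the symmetry `(r, r̄, θ) ↔ (s, s̄, φ)` we may assume `s̄/s ≤ r̄/r`; then the minimum
is comparable to `√(r̄ s̄/(r s))` when `r̄ ≤ 4r` and equals `√(s̄/s)` otherwise.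
-/

open intervalIntegral Set

lemma rpow_neg_three_halves_eq {x : ℝ} (hx : 0 < x) : x ^ (-(3:ℝ)/2) = (x * √x)⁻¹ := by
  rw [show (-(3:ℝ)/2) = -(1 + 1/2) by norm_num, rpow_neg hx.le, rpow_add hx, rpow_one,
    ← sqrt_eq_rpow]

lemma hasDerivAt_div_mul_sqrt_add_sq {D c : ℝ} (hD : 0 < D) (x : ℝ) :
    HasDerivAt (fun φ ↦ φ / (D * √(D + (c * φ) ^ 2))) ((D + (c * x) ^ 2) ^ (-(3:ℝ)/2)) x := by
  have hu : 0 < D + (c * x) ^ 2 := by positivity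
  have hsq : HasDerivAt (fun φ ↦ D + (c * φ) ^ 2) (2 * c ^ 2 * x) x :=
    (((hasDerivAt_id' x).const_mul c).pow 2 |>.const_add D).congr_deriv (by norm_num; ring)
  refine ((hasDerivAt_id x).div ((hsq.sqrt hu.ne').const_mul D)
    (by positivity)).congr_deriv ?_
  have ht := sq_sqrt hu.le
  have htpos := sqrt_pos.2 hu
  rw [rpow_neg_three_halves_eq hu, id]
  set t := √(D + (c * x) ^ 2)
  rw [← ht]
  field_simp
  linear_combination ht

lemma integral_rpow_neg_three_halves_le {D c L : ℝ} (hD : 0 < D) (hc : 0 < c) :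
    ∫ φ in (0:ℝ)..L, (D + (c * φ) ^ 2) ^ (-(3:ℝ)/2) ≤ (c * D)⁻¹ := by
  have hcont : Continuous fun φ : ℝ ↦ (D + (c * φ) ^ 2) ^ (-(3:ℝ)/2) :=
    (by fun_prop : Continuous fun φ : ℝ ↦ D + (c * φ) ^ 2).rpow_const
      fun _ ↦ Or.inl (by positivity)
  rw [integral_eq_sub_of_hasDerivAt (fun x _ ↦ hasDerivAt_div_mul_sqrt_add_sq hD x)
    (hcont.intervalIntegrable 0 L)]
  have hcL : c * L ≤ √(D + (c * L) ^ 2) :=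
    le_sqrt_of_sq_le (by nlinarith)
  have hpos : 0 < √(D + (c * L) ^ 2) := sqrt_pos.2 (by positivity)
  simp only [zero_div, sub_zero]
  rw [div_le_iff₀ (by positivity), inv_mul_eq_div, le_div_iff₀ (by positivity)]
  nlinarith

lemma integral_inv_add_sq_le {D c L : ℝ} (hD : 0 < D) (hc : 0 < c) :
    ∫ θ in (0:ℝ)..L, (D + (c * θ) ^ 2)⁻¹ ≤ π / (2 * (c * √D)) := by
  have hsD := sqrt_pos.2 hD
  have hderiv : ∀ x : ℝ, HasDerivAt (fun θ ↦ arctan (c / √D * θ) / (c * √D))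
      (D + (c * x) ^ 2)⁻¹ x := by
    intro x
    refine ((((hasDerivAt_id x).const_mul (c / √D)).arctan).div_const (c * √D)).congr_deriv ?_
    have hsq := sq_sqrt hD.le
    field_simp
    rw [hsq, id]
  have hcont : Continuous fun θ : ℝ ↦ (D + (c * θ) ^ 2)⁻¹ :=
    (by fun_prop : Continuous fun θ : ℝ ↦ D + (c * θ) ^ 2).inv₀ fun _ ↦ by positivity
  rw [integral_eq_sub_of_hasDerivAt (fun x _ ↦ hderiv x) (hcont.intervalIntegrable 0 L)]
  simp only [mul_zero, arctan_zero, zero_div, sub_zero]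
  rw [show π / (2 * (c * √D)) = π / 2 / (c * √D) by ring]
  gcongr
  linarith [arctan_lt_pi_div_two (c / √D * L)]

lemma integral_inv_add_sq_le_div {D c L : ℝ} (hD : 0 < D) (hL : 0 ≤ L) :
    ∫ θ in (0:ℝ)..L, (D + (c * θ) ^ 2)⁻¹ ≤ L / D := by
  calc ∫ θ in (0:ℝ)..L, (D + (c * θ) ^ 2)⁻¹ ≤ ∫ _ in (0:ℝ)..L, D⁻¹ :=
        integral_mono_on hL
          (((by fun_prop : Continuous fun θ : ℝ ↦ D + (c * θ) ^ 2).inv₀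
            fun _ ↦ by positivity).intervalIntegrable 0 L) intervalIntegrable_const
          fun θ _ ↦ inv_anti₀ hD (le_add_of_nonneg_right (sq_nonneg _))
    _ = L / D := by simp [div_eq_mul_inv]

lemma rpow_neg_one_half_eq_inv_sqrt {x : ℝ} (hx : 0 ≤ x) : x ^ (-(1:ℝ)/2) = (√x)⁻¹ := by
  rw [show (-(1:ℝ)/2) = -(1/2) by norm_num, rpow_neg hx, ← sqrt_eq_rpow]

noncomputable def nearDiagIntegral (r s rb sb : ℝ) : ℝ :=
  ∫ θ in (0:ℝ)..π, ∫ φ in (0:ℝ)..π, rb * sb * Xmm r s rb sb θ φ ^ (-(3:ℝ)/2)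

section
variable {r s rb sb : ℝ}

lemma sq_add_sq_le_Xmm (hr : 0 ≤ r * rb) (hs : 0 ≤ s * sb) (θ φ : ℝ) :
    (r - rb) ^ 2 + (s - sb) ^ 2 ≤ Xmm r s rb sb θ φ := by
  have hθ : 0 ≤ r * rb * (1 - cos θ) := mul_nonneg hr (by linarith [cos_le_one θ])
  have hφ : 0 ≤ s * sb * (1 - cos φ) := mul_nonneg hs (by linarith [cos_le_one φ])
  unfold Xmm
  linarith

lemma add_sq_add_sq_le_Xmm (hr : 0 ≤ r) (hs : 0 ≤ s) (hrb : 0 ≤ rb) (hsb : 0 ≤ sb)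
    {θ φ : ℝ} (hθ : |θ| ≤ π) (hφ : |φ| ≤ π) :
    (r - rb) ^ 2 + (s - sb) ^ 2 + (2 / π * √(r * rb) * θ) ^ 2 + (2 / π * √(s * sb) * φ) ^ 2
      ≤ Xmm r s rb sb θ φ := by
  have hθ' := mul_le_mul_of_nonneg_left (cos_le_one_sub_mul_cos_sq hθ)
    (mul_nonneg hr hrb)
  have hφ' := mul_le_mul_of_nonneg_left (cos_le_one_sub_mul_cos_sq hφ)
    (mul_nonneg hs hsb)
  rw [mul_pow, mul_pow, mul_pow, mul_pow, sq_sqrt (mul_nonneg hr hrb),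
    sq_sqrt (mul_nonneg hs hsb)]
  have e1 : (2 / π) ^ 2 * (r * rb) * θ ^ 2 = 2 * (r * rb * (2 / π ^ 2 * θ ^ 2)) := by ring
  have e2 : (2 / π) ^ 2 * (s * sb) * φ ^ 2 = 2 * (s * sb * (2 / π ^ 2 * φ ^ 2)) := by ring
  unfold Xmm
  linarith

lemma continuous_Xmm_rpow (hr : 0 ≤ r * rb) (hs : 0 ≤ s * sb)
    (hD : 0 < (r - rb) ^ 2 + (s - sb) ^ 2) :
    Continuous fun p : ℝ × ℝ ↦ Xmm r s rb sb p.1 p.2 ^ (-(3:ℝ)/2) :=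
  (by unfold Xmm; fun_prop : Continuous fun p : ℝ × ℝ ↦ Xmm r s rb sb p.1 p.2).rpow_const
    fun p ↦ Or.inl (hD.trans_le (sq_add_sq_le_Xmm hr hs p.1 p.2)).ne'

lemma Xmm_swap (θ φ : ℝ) : Xmm r s rb sb θ φ = Xmm s r sb rb φ θ := by
  unfold Xmm
  ring

lemma nearDiagIntegral_comm (hr : 0 ≤ r * rb) (hs : 0 ≤ s * sb)
    (hD : 0 < (r - rb) ^ 2 + (s - sb) ^ 2) :
    nearDiagIntegral r s rb sb = nearDiagIntegral s r sb rb := by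
  have hcont : Continuous
      (Function.uncurry fun θ φ ↦ rb * sb * Xmm r s rb sb θ φ ^ (-(3:ℝ)/2)) :=
    continuous_const.mul (continuous_Xmm_rpow hr hs hD)
  unfold nearDiagIntegral
  rw [intervalIntegral_intervalIntegral_swap ((hcont.continuousOn.integrableOn_compact
    (isCompact_uIcc.prod isCompact_uIcc)).mono_set (prod_mono uIoc_subset_uIcc uIoc_subset_uIcc))]
  refine integral_congr fun φ _ ↦ integral_congr fun θ _ ↦ ?_
  rw [Xmm_swap, mul_comm rb sb]

lemma integral_Xmm_rpow_le (hr : 0 ≤ r) (hs : 0 < s) (hrb : 0 ≤ rb) (hsb : 0 < sb)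
    (hD : 0 < (r - rb) ^ 2 + (s - sb) ^ 2) {θ : ℝ} (hθ : |θ| ≤ π) :
    ∫ φ in (0:ℝ)..π, Xmm r s rb sb θ φ ^ (-(3:ℝ)/2) ≤
      (2 / π * √(s * sb) * ((r - rb) ^ 2 + (s - sb) ^ 2 + (2 / π * √(r * rb) * θ) ^ 2))⁻¹ := by
  set D := (r - rb) ^ 2 + (s - sb) ^ 2 + (2 / π * √(r * rb) * θ) ^ 2
  have hD' : 0 < D := by positivity
  have hc : 0 < 2 / π * √(s * sb) := by have := sqrt_pos.2 (mul_pos hs hsb); positivity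
  have hcont := continuous_Xmm_rpow (mul_nonneg hr hrb) (mul_pos hs hsb).le hD
  refine le_trans (integral_mono_on pi_pos.le
    ((hcont.comp (Continuous.prodMk_right θ)).intervalIntegrable 0 π) ?_ fun φ hφ ↦ ?_)
    (integral_rpow_neg_three_halves_le hD' hc)
  · exact ((by fun_prop : Continuous fun φ : ℝ ↦ D + (2 / π * √(s * sb) * φ) ^ 2).rpow_const
      fun _ ↦ Or.inl (by positivity)).intervalIntegrable 0 π
  · have hφ' : |φ| ≤ π := abs_le.2 ⟨by linarith [pi_pos, hφ.1], hφ.2⟩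
    exact rpow_le_rpow_of_nonpos (by positivity)
      (add_sq_add_sq_le_Xmm hr hs.le hrb hsb.le hθ hφ') (by norm_num)

lemma nearDiagIntegral_le (hr : 0 ≤ r) (hs : 0 < s) (hrb : 0 ≤ rb) (hsb : 0 < sb)
    (hD : 0 < (r - rb) ^ 2 + (s - sb) ^ 2) :
    nearDiagIntegral r s rb sb ≤ rb * sb / (2 / π * √(s * sb)) *
      ∫ θ in (0:ℝ)..π, ((r - rb) ^ 2 + (s - sb) ^ 2 + (2 / π * √(r * rb) * θ) ^ 2)⁻¹ := by
  have hcont := continuous_Xmm_rpow (mul_nonneg hr hrb) (mul_pos hs hsb).le hD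
  rw [nearDiagIntegral, ← intervalIntegral.integral_const_mul]
  refine integral_mono_on pi_pos.le ?_ ?_ fun θ hθ ↦ ?_
  · exact (continuous_parametric_intervalIntegral_of_continuous'
      (continuous_const.mul hcont) 0 π).intervalIntegrable 0 π
  · exact (continuous_const.mul ((by fun_prop : Continuous fun θ : ℝ ↦
      (r - rb) ^ 2 + (s - sb) ^ 2 + (2 / π * √(r * rb) * θ) ^ 2).inv₀
      fun _ ↦ by positivity)).intervalIntegrable 0 π
  · have hθ' : |θ| ≤ π := abs_le.2 ⟨by linarith [pi_pos, hθ.1], hθ.2⟩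
    rw [intervalIntegral.integral_const_mul]
    calc rb * sb * ∫ φ in (0:ℝ)..π, Xmm r s rb sb θ φ ^ (-(3:ℝ)/2)
        ≤ rb * sb * (2 / π * √(s * sb) *
            ((r - rb) ^ 2 + (s - sb) ^ 2 + (2 / π * √(r * rb) * θ) ^ 2))⁻¹ := by
          gcongr
          exact integral_Xmm_rpow_le hr hs hrb hsb hD hθ'
      _ = _ := by rw [mul_inv, ← mul_assoc, div_eq_mul_inv (rb * sb)]

lemma nearDiagIntegral_le_mul_sqrt (hr : 0 < r) (hs : 0 < s) (hrb : 0 < rb) (hsb : 0 < sb)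
    (hD : 0 < (r - rb) ^ 2 + (s - sb) ^ 2) :
    nearDiagIntegral r s rb sb ≤
      π ^ 3 / 8 * (√(rb / r) * √(sb / s)) / √((r - rb) ^ 2 + (s - sb) ^ 2) := by
  have := sqrt_pos.2 hr
  have := sqrt_pos.2 hs
  have := sqrt_pos.2 hrb
  have := sqrt_pos.2 hsb
  have := sqrt_pos.2 hD
  calc nearDiagIntegral r s rb sb
      ≤ rb * sb / (2 / π * √(s * sb)) *
          ∫ θ in (0:ℝ)..π, ((r - rb) ^ 2 + (s - sb) ^ 2 + (2 / π * √(r * rb) * θ) ^ 2)⁻¹ :=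
        nearDiagIntegral_le hr.le hs hrb.le hsb hD
    _ ≤ rb * sb / (2 / π * √(s * sb)) *
          (π / (2 * (2 / π * √(r * rb) * √((r - rb) ^ 2 + (s - sb) ^ 2)))) := by
        gcongr
        exact integral_inv_add_sq_le hD (by rw [sqrt_mul hr.le]; positivity)
    _ = _ := by
        rw [sqrt_mul hr.le, sqrt_mul hs.le, sqrt_div' _ hr.le, sqrt_div' _ hs.le]
        field_simp
        rw [sq_sqrt hrb.le, sq_sqrt hsb.le]
        ring

lemma nearDiagIntegral_le_sqrt_of_two_mul_le (hr : 0 < r) (hs : 0 < s) (hsb : 0 < sb)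
    (h : 2 * r ≤ rb) :
    nearDiagIntegral r s rb sb ≤ π ^ 2 * √(sb / s) / √((r - rb) ^ 2 + (s - sb) ^ 2) := by
  set D := (r - rb) ^ 2 + (s - sb) ^ 2 with hD_def
  have hrb : 0 < rb := by linarith
  have hrbD : rb / 2 ≤ √D := (le_sqrt (by positivity) (by positivity)).2 (by nlinarith)
  have hD : 0 < D := by nlinarith
  have := sqrt_pos.2 hs
  have := sqrt_pos.2 hsb
  have := sqrt_pos.2 hD
  calc nearDiagIntegral r s rb sb
      ≤ rb * sb / (2 / π * √(s * sb)) *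
          ∫ θ in (0:ℝ)..π, (D + (2 / π * √(r * rb) * θ) ^ 2)⁻¹ :=
        nearDiagIntegral_le hr.le hs hrb.le hsb hD
    _ ≤ rb * sb / (2 / π * √(s * sb)) * (π / D) := by
        gcongr
        exact integral_inv_add_sq_le_div hD pi_pos.le
    _ = π ^ 2 / 2 * rb * √(sb / s) / D := by
        rw [sqrt_mul hs.le, sqrt_div' _ hs.le]
        field_simp
        rw [sq_sqrt hsb.le]
    _ ≤ π ^ 2 / 2 * (2 * √D) * √(sb / s) / D := by gcongr; linarith
    _ = π ^ 2 * √(sb / s) / √D := by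
        field_simp
        exact sq_sqrt hD.le

lemma nearDiagIntegral_le_of_div_le (hr : 0 < r) (hs : 0 < s) (hrb : 0 < rb) (hsb : 0 < sb)
    (hD : 0 < (r - rb) ^ 2 + (s - sb) ^ 2) (h : sb / s ≤ rb / r) :
    nearDiagIntegral r s rb sb ≤
      π ^ 2 * min (min (√(rb * sb / (r * s))) (√(sb / s))) (√(rb / r)) *
        ((r - rb) ^ 2 + (s - sb) ^ 2) ^ (-(1:ℝ)/2) := by
  rw [← div_mul_div_comm, sqrt_mul (div_nonneg hrb.le hr.le),
    rpow_neg_one_half_eq_inv_sqrt hD.le, ← div_eq_mul_inv]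
  have hyx : √(sb / s) ≤ √(rb / r) := sqrt_le_sqrt h
  have hy := sqrt_nonneg (sb / s)
  rcases le_or_gt rb (4 * r) with hsmall | hlarge
  · have hx : √(rb / r) ≤ 2 :=
      (sqrt_le_left zero_le_two).2 (by rw [div_le_iff₀ hr]; linarith)
    have hmin : √(rb / r) * √(sb / s) / 2 ≤
        min (min (√(rb / r) * √(sb / s)) (√(sb / s))) (√(rb / r)) :=
      le_min (le_min (by nlinarith) (by nlinarith)) (by nlinarith)
    refine (nearDiagIntegral_le_mul_sqrt hr hs hrb hsb hD).trans ?_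
    gcongr ?_ / _
    calc π ^ 3 / 8 * (√(rb / r) * √(sb / s))
        = π ^ 2 * (π / 4 * (√(rb / r) * √(sb / s) / 2)) := by ring
      _ ≤ _ := by
        gcongr
        exact (mul_le_of_le_one_left (by positivity) (by linarith [pi_le_four])).trans hmin
  · have hx : 1 ≤ √(rb / r) :=
      (le_sqrt zero_le_one (by positivity)).2 (by rw [le_div_iff₀ hr]; linarith)
    have hmin : min (min (√(rb / r) * √(sb / s)) (√(sb / s))) (√(rb / r)) = √(sb / s) := by
      rw [min_eq_right (le_mul_of_one_le_left hy hx), min_eq_left hyx]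
    rw [hmin]
    exact nearDiagIntegral_le_sqrt_of_two_mul_le hr hs hsb (by linarith)

end

/-- There is an absolute constant `C > 0` such that for all `r, s > 0`
and all `r̄, s̄ ≥ 0` with `(r,s) ≠ (r̄,s̄)`,
`∫₀^π ∫₀^π r̄ s̄ X₋₋^{−3/2} dφ̄ dθ̄
  ≤ C · min{ (r̄s̄/(rs))^{1/2}, (s̄/s)^{1/2}, (r̄/r)^{1/2} } · ((r−r̄)² + (s−s̄)²)^{−1/2}`. -/
theorem stmt_1 :
    ∃ C : ℝ, 0 < C ∧ ∀ r s rb sb : ℝ, 0 < r → 0 < s → 0 ≤ rb → 0 ≤ sb →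
      (r, s) ≠ (rb, sb) →
      (∫ θ in (0:ℝ)..Real.pi, ∫ φ in (0:ℝ)..Real.pi,
          rb * sb * (Xmm r s rb sb θ φ) ^ (-(3:ℝ)/2)) ≤
        C * min (min (Real.sqrt (rb * sb / (r * s))) (Real.sqrt (sb / s)))
            (Real.sqrt (rb / r)) *
          ((r - rb) ^ 2 + (s - sb) ^ 2) ^ (-(1:ℝ)/2) := by
  refine ⟨π ^ 2, by positivity, fun r s rb sb hr hs hrb hsb hne ↦ ?_⟩
  rcases (mul_nonneg hrb hsb).eq_or_lt with h0 | hpos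
  · simp only [← h0, zero_mul, intervalIntegral.integral_zero]
    positivity
  have hrb' : 0 < rb := hrb.lt_of_ne fun h ↦ by simp [← h] at hpos
  have hsb' : 0 < sb := hsb.lt_of_ne fun h ↦ by simp [← h] at hpos
  have hD : 0 < (r - rb) ^ 2 + (s - sb) ^ 2 := by
    rcases eq_or_ne r rb with rfl | h
    · have : s - sb ≠ 0 := sub_ne_zero.2 fun h ↦ hne (h ▸ rfl)
      positivity
    · have : r - rb ≠ 0 := sub_ne_zero.2 h
      positivity
  rcases le_total (sb / s) (rb / r) with h | h
  · exact nearDiagIntegral_le_of_div_le hr hs hrb' hsb' hD h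
  · have := nearDiagIntegral_le_of_div_le hs hr hsb' hrb' (by rwa [add_comm]) h
    rwa [← nearDiagIntegral_comm (mul_nonneg hr.le hrb) (mul_nonneg hs.le hsb) hD,
      mul_comm sb, mul_comm s, min_right_comm, add_comm ((s - sb) ^ 2)] at this
end

section
/- There exists an absolute constant C > 0 such that for all r, s > 0 and all r̄, s̄ ≥ 0 with (r, s) ≠ (r̄, s̄), one has ∫₀^π ∫₀^π r̄ · (s s̄ (1 − cos φ̄))^{1/2} · X₋₋^{−3/2} dφ̄ dθ̄ ≤ C · min{ (r̄/r)^{1/2}, 1 } · ((r − r̄)² + (s − s̄)²)^{−1/2}. -/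
/-!
Since `2 s s̄ (1 - cos φ̄) ≤ X₋₋`, the integrand is at most `r̄ / (a + 2 r r̄ (1 - cos θ̄))` with
`a = (r - r̄)² + (s - s̄)²`, so the `φ̄`-integral costs only a factor `π`. As
`1 - cos θ̄ ≥ 2 θ̄² / π²` on `[0, π]`, the remaining `θ̄`-integral is dominated by an arctan
integral of size `√(r̄ / r) / √a`. When `r̄ > 2 r` the trivial bound `π r̄ / a` suffices instead,
because then `r̄ ≤ 2 |r - r̄| ≤ 2 √a`.
-/

open MeasureTheory Real

theorem intervalIntegral.integral_integral_le_mul {F : ℝ → ℝ → ℝ} {g : ℝ → ℝ} {a b c d : ℝ}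
    (hab : a ≤ b) (hcd : c ≤ d) (hF : Continuous (Function.uncurry F))
    (hg : IntervalIntegrable g volume a b) (h : ∀ x ∈ Set.Icc a b, ∀ y ∈ Set.Icc c d, F x y ≤ g x) :
    ∫ x in a..b, ∫ y in c..d, F x y ≤ (d - c) * ∫ x in a..b, g x := by
  rw [← intervalIntegral.integral_const_mul]
  have hinner := intervalIntegral.continuous_parametric_intervalIntegral_of_continuous'
    (μ := volume) hF c d
  refine intervalIntegral.integral_mono_on hab (hinner.intervalIntegrable a b) (hg.const_mul _)
    fun x hx => ?_
  calc ∫ y in c..d, F x y ≤ ∫ _ in c..d, g x :=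
        intervalIntegral.integral_mono_on hcd ((hF.uncurry_left x).intervalIntegrable c d)
          intervalIntegrable_const (h x hx)
    _ = (d - c) * g x := by simp

theorem integral_inv_add_mul_sq_le {a α : ℝ} (ha : 0 < a) (hα : 0 < α) (b : ℝ) :
    ∫ x in (0:ℝ)..b, (a + α * x ^ 2)⁻¹ ≤ π / (2 * √(a * α)) := by
  set c := √(α / a)
  have hc : 0 < c := by positivity
  have hac : a * c = √(a * α) := by
    rw [show a * α = a ^ 2 * (α / a) by field_simp, sqrt_mul (sq_nonneg a), sqrt_sq ha.le]
  have hrescale : ∀ x, (a + α * x ^ 2)⁻¹ = a⁻¹ * (1 + (c * x) ^ 2)⁻¹ := fun x => by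
    rw [mul_pow, sq_sqrt (by positivity)]
    field_simp
  calc ∫ x in (0:ℝ)..b, (a + α * x ^ 2)⁻¹
      = (a * c)⁻¹ * arctan (c * b) := by
        simp_rw [hrescale, intervalIntegral.integral_const_mul,
          intervalIntegral.integral_comp_mul_left (fun x => (1 + x ^ 2)⁻¹) hc.ne',
          integral_inv_one_add_sq]
        rw [smul_eq_mul, mul_zero, arctan_zero, sub_zero, mul_inv]
        ring
    _ ≤ (a * c)⁻¹ * (π / 2) := by gcongr; exact (arctan_lt_pi_div_two _).le
    _ = π / (2 * √(a * α)) := by rw [hac]; ring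

theorem mul_one_sub_cos_nonneg {c : ℝ} (hc : 0 ≤ c) (θ : ℝ) : 0 ≤ c * (1 - cos θ) :=
  mul_nonneg hc (sub_nonneg.2 (cos_le_one θ))

theorem integral_inv_add_mul_one_sub_cos_le_div {a k : ℝ} (ha : 0 < a) (hk : 0 ≤ k) :
    ∫ θ in (0:ℝ)..π, (a + k * (1 - cos θ))⁻¹ ≤ π / a := by
  have hden : ∀ θ, a ≤ a + k * (1 - cos θ) := fun θ => by
    linarith [mul_one_sub_cos_nonneg hk θ]
  calc ∫ θ in (0:ℝ)..π, (a + k * (1 - cos θ))⁻¹ ≤ ∫ _ in (0:ℝ)..π, a⁻¹ := by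
        refine intervalIntegral.integral_mono_on pi_pos.le ?_ intervalIntegrable_const
          fun θ _ => inv_anti₀ ha (hden θ)
        exact (Continuous.inv₀ (by fun_prop) fun θ =>
          (ha.trans_le (hden θ)).ne').intervalIntegrable _ _
    _ = π / a := by simp [div_eq_mul_inv]

theorem integral_inv_add_mul_one_sub_cos_le_sqrt {a k : ℝ} (ha : 0 < a) (hk : 0 < k) :
    ∫ θ in (0:ℝ)..π, (a + k * (1 - cos θ))⁻¹ ≤ π ^ 2 / (2 * √(2 * a * k)) := by
  set α := 2 * k / π ^ 2
  have hα : 0 < α := by positivity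
  have hquad : ∀ θ ∈ Set.Icc 0 π, a + α * θ ^ 2 ≤ a + k * (1 - cos θ) := fun θ hθ => by
    have := cos_le_one_sub_mul_cos_sq (abs_le.2 ⟨by linarith [hθ.1, pi_pos], hθ.2⟩)
    have : α * θ ^ 2 = k * (2 / π ^ 2 * θ ^ 2) := by ring
    nlinarith
  have hsqrt : √(a * α) = √(2 * a * k) / π := by
    rw [show a * α = 2 * a * k / π ^ 2 by ring, sqrt_div' _ (sq_nonneg π), sqrt_sq pi_pos.le]
  calc ∫ θ in (0:ℝ)..π, (a + k * (1 - cos θ))⁻¹ ≤ ∫ θ in (0:ℝ)..π, (a + α * θ ^ 2)⁻¹ := by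
        refine intervalIntegral.integral_mono_on pi_pos.le ?_ ?_
          fun θ hθ => inv_anti₀ (by positivity) (hquad θ hθ)
        · exact (Continuous.inv₀ (by fun_prop) fun θ => by
            linarith [mul_one_sub_cos_nonneg hk.le θ]).intervalIntegrable _ _
        · exact (Continuous.inv₀ (by fun_prop) fun θ => by positivity).intervalIntegrable _ _
    _ ≤ π / (2 * √(a * α)) := integral_inv_add_mul_sq_le ha hα π
    _ = π ^ 2 / (2 * √(2 * a * k)) := by rw [hsqrt]; field_simp

theorem mul_integral_inv_add_one_sub_cos_le_sqrt {r rb a : ℝ} (hr : 0 < r) (hrb : 0 ≤ rb)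
    (ha : 0 < a) :
    rb * ∫ θ in (0:ℝ)..π, (a + 2 * r * rb * (1 - cos θ))⁻¹ ≤ π ^ 2 / 4 * √(rb / r) / √a := by
  obtain rfl | hrb := hrb.eq_or_lt
  · simp
  have hsqrt : √(2 * a * (2 * r * rb)) = 2 * √a * √(r * rb) := by
    rw [show 2 * a * (2 * r * rb) = 2 ^ 2 * a * (r * rb) by ring, sqrt_mul (by positivity),
      sqrt_mul (by positivity), sqrt_sq zero_le_two]
  have hratio : √(rb / r) = rb / √(r * rb) := by
    rw [show rb / r = rb ^ 2 / (r * rb) by field_simp, sqrt_div' _ (by positivity), sqrt_sq hrb.le]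
  calc rb * ∫ θ in (0:ℝ)..π, (a + 2 * r * rb * (1 - cos θ))⁻¹
      ≤ rb * (π ^ 2 / (2 * √(2 * a * (2 * r * rb)))) := by
        gcongr
        exact integral_inv_add_mul_one_sub_cos_le_sqrt ha (by positivity)
    _ = π ^ 2 / 4 * √(rb / r) / √a := by
        rw [hsqrt, hratio]
        field_simp
        ring

theorem mul_integral_inv_add_one_sub_cos_le_min {r rb a : ℝ} (hr : 0 < r) (hrb : 0 ≤ rb)
    (ha : 0 < a) (hra : (r - rb) ^ 2 ≤ a) :
    rb * ∫ θ in (0:ℝ)..π, (a + 2 * r * rb * (1 - cos θ))⁻¹ ≤ π ^ 2 * min (√(rb / r)) 1 / √a := by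
  have hsqrt := mul_integral_inv_add_one_sub_cos_le_sqrt hr hrb ha
  have hone : rb * ∫ θ in (0:ℝ)..π, (a + 2 * r * rb * (1 - cos θ))⁻¹ ≤ π ^ 2 / √a := by
    rcases le_or_gt rb (2 * r) with hrb2 | hrb2
    · have : √(rb / r) ≤ 2 := by
        rw [sqrt_le_left zero_le_two, div_le_iff₀ hr]; linarith
      refine hsqrt.trans ?_
      gcongr
      nlinarith [sq_nonneg π, sqrt_nonneg (rb / r)]
    · have hgap : rb ≤ 2 * √a := by
        have : rb - r ≤ √a := by
          rw [← sqrt_sq (by linarith : 0 ≤ rb - r)]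
          exact sqrt_le_sqrt (by nlinarith)
        linarith
      calc rb * ∫ θ in (0:ℝ)..π, (a + 2 * r * rb * (1 - cos θ))⁻¹ ≤ rb * (π / a) := by
            gcongr
            exact integral_inv_add_mul_one_sub_cos_le_div ha (by positivity)
        _ ≤ 2 * √a * (π / a) := by gcongr
        _ = 2 * π / √a := by
            field_simp
            rw [sq_sqrt ha.le]
        _ ≤ π ^ 2 / √a := by
            gcongr
            nlinarith [pi_gt_three]
  calc rb * ∫ θ in (0:ℝ)..π, (a + 2 * r * rb * (1 - cos θ))⁻¹
      ≤ min (π ^ 2 * √(rb / r) / √a) (π ^ 2 * 1 / √a) := by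
        refine le_min (hsqrt.trans ?_) (by simpa using hone)
        gcongr ?_ * _ / _
        linarith [sq_nonneg π]
    _ = π ^ 2 * min (√(rb / r)) 1 / √a := by
        rw [min_div_div_right (sqrt_nonneg a), mul_min_of_nonneg _ _ (sq_nonneg π)]

theorem sqrt_mul_rpow_neg_three_halves_le {w X : ℝ} (hX : 0 < X) (hwX : w ≤ X) :
    √w * X ^ (-(3:ℝ) / 2) ≤ X⁻¹ := by
  have hrpow : X ^ (-(3:ℝ) / 2) = (X * √X)⁻¹ := by
    rw [neg_div, rpow_neg hX.le, show (3:ℝ) / 2 = 1 + 1 / 2 by norm_num, rpow_add hX, rpow_one,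
      ← sqrt_eq_rpow]
  calc √w * X ^ (-(3:ℝ) / 2) ≤ √X * (X * √X)⁻¹ := by rw [hrpow]; gcongr
    _ = X⁻¹ := by field_simp

theorem Xmm_eq_add (r s rb sb θ φ : ℝ) :
    Xmm r s rb sb θ φ =
      ((r - rb) ^ 2 + (s - sb) ^ 2 + 2 * r * rb * (1 - cos θ)) + 2 * (s * sb * (1 - cos φ)) := by
  unfold Xmm; ring

section
variable {r s rb sb : ℝ}

theorem add_mul_one_sub_cos_pos (hr : 0 ≤ r) (hrb : 0 ≤ rb)
    (ha : 0 < (r - rb) ^ 2 + (s - sb) ^ 2) (θ : ℝ) :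
    0 < (r - rb) ^ 2 + (s - sb) ^ 2 + 2 * r * rb * (1 - cos θ) := by
  linarith [mul_one_sub_cos_nonneg (by positivity : 0 ≤ 2 * r * rb) θ]

theorem add_mul_one_sub_cos_le_Xmm (hs : 0 ≤ s) (hsb : 0 ≤ sb) (θ φ : ℝ) :
    (r - rb) ^ 2 + (s - sb) ^ 2 + 2 * r * rb * (1 - cos θ) ≤ Xmm r s rb sb θ φ := by
  rw [Xmm_eq_add]
  linarith [mul_one_sub_cos_nonneg (mul_nonneg hs hsb) φ]

theorem mul_sqrt_mul_Xmm_rpow_le (hr : 0 ≤ r) (hs : 0 ≤ s) (hrb : 0 ≤ rb) (hsb : 0 ≤ sb)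
    (ha : 0 < (r - rb) ^ 2 + (s - sb) ^ 2) (θ φ : ℝ) :
    rb * √(s * sb * (1 - cos φ)) * Xmm r s rb sb θ φ ^ (-(3:ℝ) / 2) ≤
      rb * ((r - rb) ^ 2 + (s - sb) ^ 2 + 2 * r * rb * (1 - cos θ))⁻¹ := by
  have hA := add_mul_one_sub_cos_pos hr hrb ha θ
  have hAX := add_mul_one_sub_cos_le_Xmm (r := r) (rb := rb) hs hsb θ φ
  have hwX : s * sb * (1 - cos φ) ≤ Xmm r s rb sb θ φ := by
    rw [Xmm_eq_add]
    linarith [mul_one_sub_cos_nonneg (mul_nonneg hs hsb) φ]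
  rw [mul_assoc]
  gcongr
  exact (sqrt_mul_rpow_neg_three_halves_le (hA.trans_le hAX) hwX).trans (inv_anti₀ hA hAX)

end

/-- There is an absolute constant `C > 0` such that for all `r, s > 0`
and all `r̄, s̄ ≥ 0` with `(r,s) ≠ (r̄,s̄)`,
`∫₀^π ∫₀^π r̄ (s s̄ (1 − cos φ̄))^{1/2} X₋₋^{−3/2} dφ̄ dθ̄
  ≤ C · min{ (r̄/r)^{1/2}, 1 } · ((r−r̄)² + (s−s̄)²)^{−1/2}`. -/
theorem stmt_2 :
    ∃ C : ℝ, 0 < C ∧ ∀ r s rb sb : ℝ, 0 < r → 0 < s → 0 ≤ rb → 0 ≤ sb →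
      (r, s) ≠ (rb, sb) →
      (∫ θ in (0:ℝ)..Real.pi, ∫ φ in (0:ℝ)..Real.pi,
          rb * Real.sqrt (s * sb * (1 - Real.cos φ)) * (Xmm r s rb sb θ φ) ^ (-(3:ℝ)/2)) ≤
        C * min (Real.sqrt (rb / r)) 1 *
          ((r - rb) ^ 2 + (s - sb) ^ 2) ^ (-(1:ℝ)/2) := by
  refine ⟨π ^ 3, by positivity, fun r s rb sb hr hs hrb hsb hne => ?_⟩
  set a := (r - rb) ^ 2 + (s - sb) ^ 2
  have ha : 0 < a := by
    rw [Ne, Prod.mk.injEq, not_and_or] at hne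
    obtain h | h := hne
    · linarith [sq_pos_of_ne_zero (sub_ne_zero.2 h), sq_nonneg (s - sb)]
    · linarith [sq_pos_of_ne_zero (sub_ne_zero.2 h), sq_nonneg (r - rb)]
  have hX : ∀ θ φ, Xmm r s rb sb θ φ ≠ 0 := fun θ φ =>
    ((add_mul_one_sub_cos_pos hr.le hrb ha θ).trans_le
      (add_mul_one_sub_cos_le_Xmm hs.le hsb θ φ)).ne'
  calc _ ≤ (π - 0) * ∫ θ in (0:ℝ)..π, rb * (a + 2 * r * rb * (1 - cos θ))⁻¹ := by
        refine intervalIntegral.integral_integral_le_mul pi_pos.le pi_pos.le ?_ ?_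
          fun θ _ φ _ => mul_sqrt_mul_Xmm_rpow_le hr.le hs.le hrb hsb ha θ φ
        · exact Continuous.mul (by fun_prop)
            (Continuous.rpow_const (by unfold Xmm; fun_prop) fun p => Or.inl (hX p.1 p.2))
        · exact (continuous_const.mul (Continuous.inv₀ (by fun_prop) fun θ =>
            (add_mul_one_sub_cos_pos hr.le hrb ha θ).ne')).intervalIntegrable _ _
    _ = π * (rb * ∫ θ in (0:ℝ)..π, (a + 2 * r * rb * (1 - cos θ))⁻¹) := by
        rw [sub_zero, intervalIntegral.integral_const_mul]
    _ ≤ π * (π ^ 2 * min (√(rb / r)) 1 / √a) := by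
        gcongr
        exact mul_integral_inv_add_one_sub_cos_le_min hr hrb ha
          (le_add_of_nonneg_right (sq_nonneg _))
    _ = π ^ 3 * min (√(rb / r)) 1 * a ^ (-(1:ℝ) / 2) := by
        rw [neg_div, rpow_neg ha.le, ← sqrt_eq_rpow]
        ring
end

section
/- For all r, s, r̄, s̄ ≥ 0 with (r, s) ≠ (r̄, s̄), the Biot–Savart kernel admits the symmetrized representation F^r(r, s, r̄, s̄) = (16 r / π²) ∫₀^{π/2} ∫₀^{π/2} r̄² s̄ cos² θ̄ · [ (s̄ − s cos φ̄) · Y₋ / (X₋₋² X₊₋²) + (s̄ + s cos φ̄) · Y₊ / (X₋₊² X₊₊²) ] dφ̄ dθ̄. -/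
open MeasureTheory Real

/-- `X₊₋ = (r−r̄)² + (s−s̄)² + 2rr̄(1+cos θ̄) + 2ss̄(1−cos φ̄)`. -/
noncomputable def Xpm (r s rb sb θ φ : ℝ) : ℝ :=
  (r - rb) ^ 2 + (s - sb) ^ 2 + 2 * r * rb * (1 + Real.cos θ) + 2 * s * sb * (1 - Real.cos φ)

/-- `X₋₊ = (r−r̄)² + (s−s̄)² + 2rr̄(1−cos θ̄) + 2ss̄(1+cos φ̄)`. -/
noncomputable def Xmp (r s rb sb θ φ : ℝ) : ℝ :=
  (r - rb) ^ 2 + (s - sb) ^ 2 + 2 * r * rb * (1 - Real.cos θ) + 2 * s * sb * (1 + Real.cos φ)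

/-- `X₊₊ = (r−r̄)² + (s−s̄)² + 2rr̄(1+cos θ̄) + 2ss̄(1+cos φ̄)`. -/
noncomputable def Xpp (r s rb sb θ φ : ℝ) : ℝ :=
  (r - rb) ^ 2 + (s - sb) ^ 2 + 2 * r * rb * (1 + Real.cos θ) + 2 * s * sb * (1 + Real.cos φ)

/-- `Y₋ = (r−r̄)² + (s−s̄)² + 2rr̄ + 2ss̄(1−cos φ̄)`. -/
noncomputable def Ym (r s rb sb φ : ℝ) : ℝ :=
  (r - rb) ^ 2 + (s - sb) ^ 2 + 2 * r * rb + 2 * s * sb * (1 - Real.cos φ)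

/-- `Y₊ = (r−r̄)² + (s−s̄)² + 2rr̄ + 2ss̄(1+cos φ̄)`. -/
noncomputable def Yp (r s rb sb φ : ℝ) : ℝ :=
  (r - rb) ^ 2 + (s - sb) ^ 2 + 2 * r * rb + 2 * s * sb * (1 + Real.cos φ)

/-- The Biot–Savart kernel `F^r` of the bi-rotational Euler flow:
`F^r(r,s,r̄,s̄) = (2/π²) ∫₀^π ∫₀^π r̄ s̄ cos θ̄ (s̄ − s cos φ̄) X₋₋^{−2} dφ̄ dθ̄`. -/
noncomputable def Fr (r s rb sb : ℝ) : ℝ :=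
  (2 / Real.pi ^ 2) * ∫ θ in (0:ℝ)..Real.pi, ∫ φ in (0:ℝ)..Real.pi,
    rb * sb * Real.cos θ * (sb - s * Real.cos φ) / (Xmm r s rb sb θ φ) ^ 2

/-! Reflecting `θ̄ ↦ π − θ̄` and `φ̄ ↦ π − φ̄` folds `[0,π]²` onto `[0,π/2]²`. The reflections
turn `X₋₋` into `X₊₋`, `X₋₊`, `X₊₊` and flip the sign of `cos θ̄`, so the four folded terms pair
into differences `X₋₋⁻² − X₊₋⁻²` and `X₋₊⁻² − X₊₊⁻²`; since `X₊₋ − X₋₋ = 4 r r̄ cos θ̄` and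
`X₊₋ + X₋₋ = 2 Y₋` (likewise with `Y₊`), each difference equals `8 r r̄ cos θ̄ Y / (X² X²)`.
For `(r,s) ≠ (r̄,s̄)` all the `X` are positive, so the integrands are continuous. -/

namespace intervalIntegral

theorem integral_eq_integral_add_comp_sub_left {f : ℝ → ℝ} {a : ℝ}
    (hf : IntervalIntegrable f volume 0 a) :
    ∫ x in (0:ℝ)..a, f x = ∫ x in (0:ℝ)..(a / 2), (f x + f (a - x)) := by
  have hmid : a / 2 ∈ Set.uIcc 0 a := by
    rw [Set.mem_uIcc]
    rcases le_total 0 a with h | h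
    · exact Or.inl ⟨by linarith, by linarith⟩
    · exact Or.inr ⟨by linarith, by linarith⟩
  have hleft := hf.mono_set (Set.uIcc_subset_uIcc_left hmid)
  have hright := hf.mono_set (Set.uIcc_subset_uIcc_right hmid)
  have hreflect : IntervalIntegrable (fun x => f (a - x)) volume 0 (a / 2) := by
    simpa [sub_half] using hright.symm.comp_sub_left a
  rw [integral_add hleft hreflect, integral_comp_sub_left f a, sub_zero, sub_half,
    integral_add_adjacent_intervals hleft hright]

theorem integral_integral_eq_integral_integral_add_comp_sub_left {f : ℝ → ℝ → ℝ}
    (hf : Continuous (Function.uncurry f)) (a b : ℝ) :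
    ∫ x in (0:ℝ)..a, ∫ y in (0:ℝ)..b, f x y =
      ∫ x in (0:ℝ)..(a / 2), ∫ y in (0:ℝ)..(b / 2),
        (f x y + f x (b - y) + f (a - x) y + f (a - x) (b - y)) := by
  set g : ℝ → ℝ → ℝ := fun x y => f x y + f x (b - y)
  have hg : Continuous (Function.uncurry g) := by fun_prop
  calc ∫ x in (0:ℝ)..a, ∫ y in (0:ℝ)..b, f x y
      = ∫ x in (0:ℝ)..a, ∫ y in (0:ℝ)..(b / 2), g x y := by
        congr 1; ext x
        exact integral_eq_integral_add_comp_sub_left ((hf.uncurry_left x).intervalIntegrable _ _)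
    _ = ∫ x in (0:ℝ)..(a / 2),
          ((∫ y in (0:ℝ)..(b / 2), g x y) + ∫ y in (0:ℝ)..(b / 2), g (a - x) y) :=
        integral_eq_integral_add_comp_sub_left
          ((continuous_parametric_intervalIntegral_of_continuous' hg _ _).intervalIntegrable _ _)
    _ = _ := by
        congr 1; ext x
        rw [← integral_add ((hg.uncurry_left x).intervalIntegrable _ _)
          ((hg.uncurry_left (a - x)).intervalIntegrable _ _)]
        simp only [g, add_assoc]

end intervalIntegral

section BiotSavart

variable {r s rb sb : ℝ}

theorem dist_sq_add_mul_add_mul_pos (hr : 0 ≤ r) (hs : 0 ≤ s) (hrb : 0 ≤ rb) (hsb : 0 ≤ sb)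
    (hne : (r, s) ≠ (rb, sb)) {a b : ℝ} (ha : 0 ≤ a) (hb : 0 ≤ b) :
    0 < (r - rb) ^ 2 + (s - sb) ^ 2 + 2 * r * rb * a + 2 * s * sb * b := by
  have hdist : 0 < (r - rb) ^ 2 + (s - sb) ^ 2 := by
    obtain h | h : r ≠ rb ∨ s ≠ sb := by
      contrapose! hne
      rw [hne.1, hne.2]
    all_goals
      have := sq_pos_of_ne_zero (sub_ne_zero.2 h)
      positivity
  have : 0 ≤ 2 * r * rb * a + 2 * s * sb * b := by positivity
  linarith

variable (r s rb sb)

theorem Xmm_pi_sub_left (θ φ : ℝ) : Xmm r s rb sb (π - θ) φ = Xpm r s rb sb θ φ := by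
  simp only [Xmm, Xpm, cos_pi_sub, sub_neg_eq_add]

theorem Xmm_pi_sub_right (θ φ : ℝ) : Xmm r s rb sb θ (π - φ) = Xmp r s rb sb θ φ := by
  simp only [Xmm, Xmp, cos_pi_sub, sub_neg_eq_add]

theorem Xmm_pi_sub_pi_sub (θ φ : ℝ) : Xmm r s rb sb (π - θ) (π - φ) = Xpp r s rb sb θ φ := by
  simp only [Xmm, Xpp, cos_pi_sub, sub_neg_eq_add]

theorem sq_Xpm_sub_sq_Xmm (θ φ : ℝ) :
    Xpm r s rb sb θ φ ^ 2 - Xmm r s rb sb θ φ ^ 2 = 8 * r * rb * cos θ * Ym r s rb sb φ := by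
  simp only [Xpm, Xmm, Ym]
  ring

theorem sq_Xpp_sub_sq_Xmp (θ φ : ℝ) :
    Xpp r s rb sb θ φ ^ 2 - Xmp r s rb sb θ φ ^ 2 = 8 * r * rb * cos θ * Yp r s rb sb φ := by
  simp only [Xpp, Xmp, Yp]
  ring

noncomputable def frIntegrand (θ φ : ℝ) : ℝ :=
  rb * sb * cos θ * (sb - s * cos φ) / Xmm r s rb sb θ φ ^ 2

noncomputable def frSymmetrizedIntegrand (θ φ : ℝ) : ℝ :=
  rb ^ 2 * sb * cos θ ^ 2 *
    ((sb - s * cos φ) * Ym r s rb sb φ / (Xmm r s rb sb θ φ ^ 2 * Xpm r s rb sb θ φ ^ 2) +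
     (sb + s * cos φ) * Yp r s rb sb φ / (Xmp r s rb sb θ φ ^ 2 * Xpp r s rb sb θ φ ^ 2))

theorem frIntegrand_fold {θ φ : ℝ} (hmm : Xmm r s rb sb θ φ ≠ 0) (hpm : Xpm r s rb sb θ φ ≠ 0)
    (hmp : Xmp r s rb sb θ φ ≠ 0) (hpp : Xpp r s rb sb θ φ ≠ 0) :
    frIntegrand r s rb sb θ φ + frIntegrand r s rb sb θ (π - φ) +
        frIntegrand r s rb sb (π - θ) φ + frIntegrand r s rb sb (π - θ) (π - φ) =
      8 * r * frSymmetrizedIntegrand r s rb sb θ φ := by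
  have hm := inv_sub_inv (pow_ne_zero 2 hmm) (pow_ne_zero 2 hpm)
  have hp := inv_sub_inv (pow_ne_zero 2 hmp) (pow_ne_zero 2 hpp)
  rw [sq_Xpm_sub_sq_Xmm] at hm
  rw [sq_Xpp_sub_sq_Xmp] at hp
  simp only [frIntegrand, frSymmetrizedIntegrand]
  rw [Xmm_pi_sub_pi_sub, Xmm_pi_sub_left, Xmm_pi_sub_right, cos_pi_sub, cos_pi_sub]
  linear_combination rb * sb * cos θ * ((sb - s * cos φ) * hm + (sb + s * cos φ) * hp)

end BiotSavart

/-- For all `r, s, r̄, s̄ ≥ 0` with `(r,s) ≠ (r̄,s̄)`, the Biot–Savart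
kernel admits the symmetrized representation
`F^r(r,s,r̄,s̄) = (16r/π²) ∫₀^{π/2} ∫₀^{π/2} r̄² s̄ cos² θ̄
  [ (s̄ − s cos φ̄) Y₋ / (X₋₋² X₊₋²) + (s̄ + s cos φ̄) Y₊ / (X₋₊² X₊₊²) ] dφ̄ dθ̄`. -/
theorem stmt_5 (r s rb sb : ℝ) (hr : 0 ≤ r) (hs : 0 ≤ s) (hrb : 0 ≤ rb) (hsb : 0 ≤ sb)
    (hne : (r, s) ≠ (rb, sb)) :
    Fr r s rb sb =
      (16 * r / Real.pi ^ 2) *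
        ∫ θ in (0:ℝ)..(Real.pi / 2), ∫ φ in (0:ℝ)..(Real.pi / 2),
          rb ^ 2 * sb * (Real.cos θ) ^ 2 *
            ((sb - s * Real.cos φ) * Ym r s rb sb φ /
                ((Xmm r s rb sb θ φ) ^ 2 * (Xpm r s rb sb θ φ) ^ 2) +
             (sb + s * Real.cos φ) * Yp r s rb sb φ /
                ((Xmp r s rb sb θ φ) ^ 2 * (Xpp r s rb sb θ φ) ^ 2)) := by
  have hpos {a b : ℝ} := dist_sq_add_mul_add_mul_pos hr hs hrb hsb hne (a := a) (b := b)
  have hmm (θ φ : ℝ) : Xmm r s rb sb θ φ ≠ 0 :=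
    (hpos (sub_nonneg.2 (cos_le_one θ)) (sub_nonneg.2 (cos_le_one φ))).ne'
  have hpm (θ φ : ℝ) : Xpm r s rb sb θ φ ≠ 0 :=
    (hpos (neg_le_iff_add_nonneg'.1 (neg_one_le_cos θ)) (sub_nonneg.2 (cos_le_one φ))).ne'
  have hmp (θ φ : ℝ) : Xmp r s rb sb θ φ ≠ 0 :=
    (hpos (sub_nonneg.2 (cos_le_one θ)) (neg_le_iff_add_nonneg'.1 (neg_one_le_cos φ))).ne'
  have hpp (θ φ : ℝ) : Xpp r s rb sb θ φ ≠ 0 :=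
    (hpos (neg_le_iff_add_nonneg'.1 (neg_one_le_cos θ))
      (neg_le_iff_add_nonneg'.1 (neg_one_le_cos φ))).ne'
  have hcont : Continuous (Function.uncurry (frIntegrand r s rb sb)) := by
    refine Continuous.div (by fun_prop) ?_ fun p => pow_ne_zero 2 (hmm p.1 p.2)
    simp only [Xmm]
    fun_prop
  change 2 / π ^ 2 * ∫ θ in (0:ℝ)..π, ∫ φ in (0:ℝ)..π, frIntegrand r s rb sb θ φ =
    16 * r / π ^ 2 * ∫ θ in (0:ℝ)..(π / 2), ∫ φ in (0:ℝ)..(π / 2),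
      frSymmetrizedIntegrand r s rb sb θ φ
  simp only [intervalIntegral.integral_integral_eq_integral_integral_add_comp_sub_left hcont,
    frIntegrand_fold r s rb sb (hmm _ _) (hpm _ _) (hmp _ _) (hpp _ _),
    intervalIntegral.integral_const_mul]
  ring
end

section
/- Let M ≥ 0, let Φ : ℝ⁴ → ℝ⁴ be a map, and let w₀, w : Π → ℝ be functions such that for every y ∈ ℝ⁴: |r_{Φ(y)} − r_y| ≤ M, |s_{Φ(y)} − s_y| ≤ M, and r_y s_y · w(r_{Φ(y)}, s_{Φ(y)}) = r_{Φ(y)} s_{Φ(y)} · w₀(r_y, s_y). Suppose N₀ := sup_{(r,s)∈Π} |w₀(r,s)|, N₁ := sup_{r>0} |w₀(r,s)|/r, N₂ := sup_{s>0} |w₀(r,s)|/s and N₃ := sup_{r,s>0} |w₀(r,s)|/(r s) are all finite. Then for every y ∈ ℝ⁴ with r_y > 0 and s_y > 0, |w(r_{Φ(y)}, s_{Φ(y)})| ≤ N₀ + (N₁ + N₂)(1 + M) + N₃ (1 + M)². In particular, if Φ maps {y ∈ ℝ⁴ : r_y s_y > 0} onto {x ∈ ℝ⁴ : r_x s_x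 > 0}, then sup_{(r,s)∈Π, rs>0} |w(r,s)| ≤ N₀ + (N₁ + N₂)(1 + M) + N₃ (1 + M)². -/
/-!
Since `w/(rs)` is transported by `Φ`, `|w(Φ y)| = r' s' |w₀(r, s)| / (r s)` with `r' ≤ r + M` and
`s' ≤ s + M`. Expanding `(r + M)(s + M)` splits `|w₀|(r + M)(s + M)/(r s)` into four terms, each
controlled by exactly one of `N₀`, `N₁`, `N₂`, `N₃`; the stated constant comes from running this
with the weaker displacement bound `1 + M`. Surjectivity then lets every `(r, s)` with
`r s > 0` be written as `(r_{Φ y}, s_{Φ y})`.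
-/

open MeasureTheory Real

/-- `r_x = √(x₁² + x₂²)` for `x ∈ ℝ⁴`. -/
noncomputable def rx (x : Fin 4 → ℝ) : ℝ := Real.sqrt ((x 0) ^ 2 + (x 1) ^ 2)

/-- `s_x = √(x₃² + x₄²)` for `x ∈ ℝ⁴`. -/
noncomputable def sx (x : Fin 4 → ℝ) : ℝ := Real.sqrt ((x 2) ^ 2 + (x 3) ^ 2)

lemma rx_nonneg (x : Fin 4 → ℝ) : 0 ≤ rx x := Real.sqrt_nonneg _

lemma sx_nonneg (x : Fin 4 → ℝ) : 0 ≤ sx x := Real.sqrt_nonneg _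

lemma exists_rx_sx_eq {r s : ℝ} (hr : 0 ≤ r) (hs : 0 ≤ s) : ∃ x, rx x = r ∧ sx x = s :=
  ⟨![r, 0, s, 0], by simp [rx, hr], by simp [sx, hs]⟩

lemma mul_mul_abs_le_of_le_add {r s a b M v N₀ N₁ N₂ N₃ : ℝ} (hr : 0 < r) (hs : 0 < s)
    (ha : 0 ≤ a) (hb : 0 ≤ b) (har : a ≤ r + M) (hbs : b ≤ s + M) (hM : 0 ≤ M)
    (h0 : |v| ≤ N₀) (h1 : |v| ≤ N₁ * r) (h2 : |v| ≤ N₂ * s) (h3 : |v| ≤ N₃ * (r * s)) :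
    a * b * |v| ≤ (N₀ + (N₁ + N₂) * M + N₃ * M ^ 2) * (r * s) := by
  have hab : a * b ≤ (r + M) * (s + M) := mul_le_mul har hbs hb (ha.trans har)
  calc a * b * |v| ≤ (r + M) * (s + M) * |v| := by gcongr
    _ = r * s * |v| + M * s * |v| + M * r * |v| + M ^ 2 * |v| := by ring
    _ ≤ r * s * N₀ + M * s * (N₁ * r) + M * r * (N₂ * s) + M ^ 2 * (N₃ * (r * s)) := by
      gcongr
    _ = (N₀ + (N₁ + N₂) * M + N₃ * M ^ 2) * (r * s) := by ring

lemma abs_le_of_mul_eq_mul {r s a b u v B : ℝ} (hrs : 0 < r * s) (ha : 0 ≤ a) (hb : 0 ≤ b)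
    (huv : r * s * u = a * b * v) (hv : a * b * |v| ≤ B * (r * s)) : |u| ≤ B := by
  refine le_of_mul_le_mul_right ?_ hrs
  calc |u| * (r * s) = |r * s * u| := by rw [abs_mul, abs_of_pos hrs, mul_comm]
    _ = a * b * |v| := by rw [huv, abs_mul, abs_of_nonneg (mul_nonneg ha hb)]
    _ ≤ B * (r * s) := hv

/-- Abstract form of the vorticity `L^∞` growth estimate: `Φ` plays the
role of the flow map, `M` bounds the radial displacements, and the product relation
expresses conservation of the relative vorticity `w/(rs)` along the flow. -/
theorem stmt_11 (M : ℝ) (hM : 0 ≤ M) (Φ : (Fin 4 → ℝ) → (Fin 4 → ℝ))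
    (w₀ w : ℝ × ℝ → ℝ)
    (hdr : ∀ y, |rx (Φ y) - rx y| ≤ M) (hds : ∀ y, |sx (Φ y) - sx y| ≤ M)
    (hcons : ∀ y, rx y * sx y * w (rx (Φ y), sx (Φ y))
      = rx (Φ y) * sx (Φ y) * w₀ (rx y, sx y))
    (N₀ N₁ N₂ N₃ : ℝ)
    (h0 : ∀ r s : ℝ, 0 ≤ r → 0 ≤ s → |w₀ (r, s)| ≤ N₀)
    (h1 : ∀ r s : ℝ, 0 < r → 0 ≤ s → |w₀ (r, s)| ≤ N₁ * r)
    (h2 : ∀ r s : ℝ, 0 ≤ r → 0 < s → |w₀ (r, s)| ≤ N₂ * s)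
    (h3 : ∀ r s : ℝ, 0 < r → 0 < s → |w₀ (r, s)| ≤ N₃ * (r * s)) :
    (∀ y : Fin 4 → ℝ, 0 < rx y → 0 < sx y →
        |w (rx (Φ y), sx (Φ y))| ≤ N₀ + (N₁ + N₂) * (1 + M) + N₃ * (1 + M) ^ 2) ∧
    ((∀ x : Fin 4 → ℝ, 0 < rx x * sx x → ∃ y : Fin 4 → ℝ, 0 < rx y * sx y ∧ Φ y = x) →
      ∀ r s : ℝ, 0 < r → 0 < s →
        |w (r, s)| ≤ N₀ + (N₁ + N₂) * (1 + M) + N₃ * (1 + M) ^ 2) := by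
  have bound : ∀ y : Fin 4 → ℝ, 0 < rx y → 0 < sx y →
      |w (rx (Φ y), sx (Φ y))| ≤ N₀ + (N₁ + N₂) * (1 + M) + N₃ * (1 + M) ^ 2 := by
    intro y hr hs
    have har : rx (Φ y) ≤ rx y + (1 + M) := by linarith [(abs_sub_le_iff.1 (hdr y)).1]
    have hbs : sx (Φ y) ≤ sx y + (1 + M) := by linarith [(abs_sub_le_iff.1 (hds y)).1]
    exact abs_le_of_mul_eq_mul (mul_pos hr hs) (rx_nonneg _) (sx_nonneg _) (hcons y)
      (mul_mul_abs_le_of_le_add hr hs (rx_nonneg _) (sx_nonneg _) har hbs (by linarith)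
        (h0 _ _ hr.le hs.le) (h1 _ _ hr hs.le) (h2 _ _ hr.le hs) (h3 _ _ hr hs))
  refine ⟨bound, fun hsurj r s hr hs => ?_⟩
  obtain ⟨x, rfl, rfl⟩ := exists_rx_sx_eq hr.le hs.le
  obtain ⟨y, hy, rfl⟩ := hsurj x (mul_pos hr hs)
  exact bound y (pos_of_mul_pos_left hy (sx_nonneg y)) (pos_of_mul_pos_right hy (rx_nonneg y))
end

section
/- Let M ≥ 0, let Φ : ℝ⁴ → ℝ⁴ be a measurable bijection preserving Lebesgue measure on ℝ⁴, and let w₀, w : Π → ℝ be measurable functions such that for almost every y ∈ ℝ⁴: |r_{Φ(y)} − r_y| ≤ M, |s_{Φ(y)} − s_y| ≤ M, and r_y s_y · w(r_{Φ(y)}, s_{Φ(y)}) = r_{Φ(y)} s_{Φ(y)} · w₀(r_y, s_y). Then ∫_{ℝ⁴} (r_x/s_x) |w(r_x, s_x)| dx ≤ (1 + M)² · ( ∫_{ℝ⁴} (r_y/s_y) |w₀(r_y, s_y)| dy + ∫_{ℝ⁴} |w₀(r_y, s_y)| / (r_y s_y) dy ), and likewise ∫_{ℝ⁴} (s_x/r_x)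 |w(r_x, s_x)| dx ≤ (1 + M)² · ( ∫_{ℝ⁴} (s_y/r_y) |w₀(r_y, s_y)| dy + ∫_{ℝ⁴} |w₀(r_y, s_y)| / (r_y s_y) dy ). -/
open MeasureTheory Real ENNReal

/-!
Along the flow, `w/(rs)` is transported, so at the image point `Φ y` the weight `(r/s)|w|`
equals `r_{Φ y}² |w₀(y)| / (r_y s_y)`. A displacement bounded by `M` gives
`r_{Φ y}² ≤ (r_y + M)² ≤ (1 + M)² (r_y² + 1)`, which splits the right-hand side into the two
weights `(r/s)|w₀|` and `|w₀|/(rs)`. Since `Φ` preserves volume, integrating over `y` gives the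
estimate; the second one is the same argument with `r` and `s` exchanged.
-/

lemma sq_le_one_add_sq_mul_sq_add_one {M r r' : ℝ} (hr : 0 ≤ r) (hd : |r' - r| ≤ M) :
    r' ^ 2 ≤ (1 + M) ^ 2 * (r ^ 2 + 1) := by
  have hM : 0 ≤ M := (abs_nonneg _).trans hd
  have hr' : |r'| ≤ r + M := by
    rw [abs_le] at hd ⊢
    constructor <;> linarith [hd.1, hd.2]
  calc r' ^ 2 = |r'| ^ 2 := (sq_abs r').symm
    _ ≤ (r + M) ^ 2 := pow_le_pow_left₀ (abs_nonneg r') hr' 2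
    _ ≤ (1 + M) ^ 2 * (r ^ 2 + 1) := by nlinarith [sq_nonneg (r * M - 1), mul_nonneg hr hM]

lemma div_mul_abs_eq_of_mul_eq {r s r' s' W W₀ : ℝ} (hrs : 0 < r * s) (hr' : 0 ≤ r')
    (hs' : 0 < s') (hc : r * s * W = r' * s' * W₀) :
    r' / s' * |W| = r' ^ 2 * |W₀| / (r * s) := by
  have hW : |W| = r' * s' * |W₀| / (r * s) := by
    rw [eq_div_iff hrs.ne', ← abs_of_pos hrs, ← abs_of_nonneg hr', ← abs_of_pos hs',
      ← abs_mul, ← abs_mul, ← abs_mul, mul_comm, hc]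
  rw [hW]
  field_simp

lemma div_mul_abs_le_of_mul_eq {M r s r' s' W W₀ : ℝ} (hr : 0 < r) (hs : 0 < s)
    (hr' : 0 ≤ r') (hs' : 0 ≤ s') (hd : |r' - r| ≤ M) (hc : r * s * W = r' * s' * W₀) :
    r' / s' * |W| ≤ (1 + M) ^ 2 * (r / s * |W₀| + |W₀| / (r * s)) := by
  have hrs : 0 < r * s := mul_pos hr hs
  have hsplit : (1 + M) ^ 2 * (r / s * |W₀| + |W₀| / (r * s))
      = (1 + M) ^ 2 * (r ^ 2 + 1) * |W₀| / (r * s) := by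
    field_simp
  rcases hs'.eq_or_lt with rfl | hs'
  · rw [_root_.div_zero, zero_mul, hsplit]
    positivity
  · rw [div_mul_abs_eq_of_mul_eq hrs hr' hs' hc, hsplit]
    gcongr
    exact sq_le_one_add_sq_mul_sq_add_one hr.le hd

lemma MeasureTheory.MeasurePreserving.lintegral_le_of_ae_comp_le {α β : Type*}
    [MeasurableSpace α] [MeasurableSpace β] {μ : Measure α} {ν : Measure β} {Φ : α → β}
    (hΦ : MeasurePreserving Φ μ ν) {F : β → ℝ≥0∞} {G : α → ℝ≥0∞} (hF : Measurable F)
    (hFG : ∀ᵐ x ∂μ, F (Φ x) ≤ G x) :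
    ∫⁻ y, F y ∂ν ≤ ∫⁻ x, G x ∂μ :=
  hΦ.lintegral_comp hF ▸ lintegral_mono_ae hFG

lemma MeasureTheory.MeasurePreserving.lintegral_div_mul_abs_le {α : Type*}
    [MeasurableSpace α] {μ : Measure α} {Φ : α → α} (hΦ : MeasurePreserving Φ μ μ) {M : ℝ}
    {R S f g : α → ℝ}
    (hR : Measurable R) (hS : Measurable S) (hf : Measurable f) (hg : Measurable g)
    (hR₀ : ∀ x, 0 ≤ R x) (hS₀ : ∀ x, 0 ≤ S x) (hRS : ∀ᵐ y ∂μ, 0 < R y ∧ 0 < S y)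
    (hd : ∀ᵐ y ∂μ, |R (Φ y) - R y| ≤ M)
    (hc : ∀ᵐ y ∂μ, R y * S y * f (Φ y) = R (Φ y) * S (Φ y) * g y) :
    ∫⁻ x, ENNReal.ofReal (R x / S x * |f x|) ∂μ ≤
      ENNReal.ofReal ((1 + M) ^ 2) *
        (∫⁻ y, ENNReal.ofReal (R y / S y * |g y|) ∂μ +
          ∫⁻ y, ENNReal.ofReal (|g y| / (R y * S y)) ∂μ) := by
  have hG : Measurable fun y ↦ ENNReal.ofReal (R y / S y * |g y|) := by fun_prop
  have hH : Measurable fun y ↦ ENNReal.ofReal (|g y| / (R y * S y)) := by fun_prop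
  rw [← lintegral_add_left hG, ← lintegral_const_mul' _ _ ofReal_ne_top]
  refine hΦ.lintegral_le_of_ae_comp_le (by fun_prop) ?_
  filter_upwards [hRS, hd, hc] with y ⟨hRy, hSy⟩ hdy hcy
  rw [← ENNReal.ofReal_add (by positivity) (by positivity),
    ← ENNReal.ofReal_mul (by positivity)]
  exact ENNReal.ofReal_le_ofReal
    (div_mul_abs_le_of_mul_eq hRy hSy (hR₀ _) (hS₀ _) hdy hcy)

lemma measurable_rx : Measurable rx := by
  unfold rx; fun_prop

lemma measurable_sx : Measurable sx := by
  unfold sx; fun_prop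

lemma ae_pos_rx_and_pos_sx : ∀ᵐ x : Fin 4 → ℝ, 0 < rx x ∧ 0 < sx x := by
  have hne : ∀ i : Fin 4, ∀ᵐ x : Fin 4 → ℝ, x i ≠ 0 := fun i ↦ by
    rw [volume_pi]; exact Measure.ae_eval_ne _ i 0
  filter_upwards [hne 0, hne 2] with x hx₀ hx₂
  exact ⟨Real.sqrt_pos.2 (by positivity), Real.sqrt_pos.2 (by positivity)⟩

theorem stmt_12_general (M : ℝ) (Φ : (Fin 4 → ℝ) → (Fin 4 → ℝ))
    (hΦ : MeasurePreserving Φ volume volume)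
    (w₀ w : ℝ × ℝ → ℝ) (hw₀ : Measurable w₀) (hw : Measurable w)
    (hdr : ∀ᵐ y : Fin 4 → ℝ, |rx (Φ y) - rx y| ≤ M)
    (hds : ∀ᵐ y : Fin 4 → ℝ, |sx (Φ y) - sx y| ≤ M)
    (hcons : ∀ᵐ y : Fin 4 → ℝ, rx y * sx y * w (rx (Φ y), sx (Φ y))
      = rx (Φ y) * sx (Φ y) * w₀ (rx y, sx y)) :
    (∫⁻ x : Fin 4 → ℝ, ENNReal.ofReal (rx x / sx x * |w (rx x, sx x)|)) ≤
      ENNReal.ofReal ((1 + M) ^ 2) *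
        ((∫⁻ y : Fin 4 → ℝ, ENNReal.ofReal (rx y / sx y * |w₀ (rx y, sx y)|)) +
         (∫⁻ y : Fin 4 → ℝ, ENNReal.ofReal (|w₀ (rx y, sx y)| / (rx y * sx y)))) ∧
    (∫⁻ x : Fin 4 → ℝ, ENNReal.ofReal (sx x / rx x * |w (rx x, sx x)|)) ≤
      ENNReal.ofReal ((1 + M) ^ 2) *
        ((∫⁻ y : Fin 4 → ℝ, ENNReal.ofReal (sx y / rx y * |w₀ (rx y, sx y)|)) +
         (∫⁻ y : Fin 4 → ℝ, ENNReal.ofReal (|w₀ (rx y, sx y)| / (rx y * sx y)))) := by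
  have hf : Measurable fun x ↦ w (rx x, sx x) := hw.comp (measurable_rx.prodMk measurable_sx)
  have hg : Measurable fun x ↦ w₀ (rx x, sx x) := hw₀.comp (measurable_rx.prodMk measurable_sx)
  have hrx₀ (x : Fin 4 → ℝ) : 0 ≤ rx x := Real.sqrt_nonneg _
  have hsx₀ (x : Fin 4 → ℝ) : 0 ≤ sx x := Real.sqrt_nonneg _
  refine ⟨hΦ.lintegral_div_mul_abs_le measurable_rx measurable_sx hf hg hrx₀ hsx₀
    ae_pos_rx_and_pos_sx hdr hcons, ?_⟩
  have hsr := hΦ.lintegral_div_mul_abs_le measurable_sx measurable_rx hf hg hsx₀ hrx₀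
    (ae_pos_rx_and_pos_sx.mono fun _ h ↦ h.symm) hds
    (by simpa only [mul_comm (rx _) (sx _)] using hcons)
  simpa only [mul_comm (sx _) (rx _)] using hsr

/-- Abstract form of the weighted `L¹` vorticity growth estimate for
bi-rotational Euler flows: `Φ` is the measure-preserving flow map, `M` bounds the radial
displacements and the product relation expresses conservation of `w/(rs)` along the flow.
Then `∫ (r_x/s_x)|w(r_x,s_x)| dx ≤ (1+M)²(∫ (r_y/s_y)|w₀| dy + ∫ |w₀|/(r_y s_y) dy)`,
and likewise with the roles of `r` and `s` exchanged. -/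
theorem stmt_12 (M : ℝ) (hM : 0 ≤ M) (Φ : (Fin 4 → ℝ) → (Fin 4 → ℝ))
    (hΦmeas : Measurable Φ) (hΦ : MeasurePreserving Φ volume volume)
    (hΦbij : Function.Bijective Φ)
    (w₀ w : ℝ × ℝ → ℝ) (hw₀ : Measurable w₀) (hw : Measurable w)
    (hdr : ∀ᵐ y : Fin 4 → ℝ, |rx (Φ y) - rx y| ≤ M)
    (hds : ∀ᵐ y : Fin 4 → ℝ, |sx (Φ y) - sx y| ≤ M)
    (hcons : ∀ᵐ y : Fin 4 → ℝ, rx y * sx y * w (rx (Φ y), sx (Φ y))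
      = rx (Φ y) * sx (Φ y) * w₀ (rx y, sx y)) :
    (∫⁻ x : Fin 4 → ℝ, ENNReal.ofReal (rx x / sx x * |w (rx x, sx x)|)) ≤
      ENNReal.ofReal ((1 + M) ^ 2) *
        ((∫⁻ y : Fin 4 → ℝ, ENNReal.ofReal (rx y / sx y * |w₀ (rx y, sx y)|)) +
         (∫⁻ y : Fin 4 → ℝ, ENNReal.ofReal (|w₀ (rx y, sx y)| / (rx y * sx y)))) ∧
    (∫⁻ x : Fin 4 → ℝ, ENNReal.ofReal (sx x / rx x * |w (rx x, sx x)|)) ≤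
      ENNReal.ofReal ((1 + M) ^ 2) *
        ((∫⁻ y : Fin 4 → ℝ, ENNReal.ofReal (sx y / rx y * |w₀ (rx y, sx y)|)) +
         (∫⁻ y : Fin 4 → ℝ, ENNReal.ofReal (|w₀ (rx y, sx y)| / (rx y * sx y)))) :=
  stmt_12_general M Φ hΦ w₀ w hw₀ hw hdr hds hcons
end

section
/- Let u : ℝ⁴ → ℝ⁴ be three times continuously differentiable with all partial derivatives up to order 3 bounded on ℝ⁴. Assume u is bi-rotationally symmetric, i.e. u(Rx) = R u(x) for every rotation R of ℝ⁴ that acts as a rotation in the (x₁,x₂)-plane fixing x₃,x₄, and for every rotation R that acts as a rotation in the (x₃,x₄)-plane fixing x₁,x₂; and assume u is swirl-free: x₂ u¹(x) = x₁ u²(x) and x₄ u³(x) = x₃ u⁴(x) for all x ∈ ℝ⁴. Let ω^{1,3} := ∂_{x₃} u¹ − ∂_{x₁} u³. Then sup over {x ∈ ℝ⁴ : x₁ x₃ ≠ 0} of (1 + r_x + s_x) |ω^{1,3}(x)| / |x₁ x₃| is finite. -/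
open MeasureTheory Real

/-- Rotation by angle `α` in the `(x₁,x₂)`-plane, fixing `x₃, x₄`. -/
noncomputable def rot12 (α : ℝ) (x : Fin 4 → ℝ) : Fin 4 → ℝ :=
  ![x 0 * Real.cos α - x 1 * Real.sin α, x 0 * Real.sin α + x 1 * Real.cos α, x 2, x 3]

/-- Rotation by angle `α` in the `(x₃,x₄)`-plane, fixing `x₁, x₂`. -/
noncomputable def rot34 (α : ℝ) (x : Fin 4 → ℝ) : Fin 4 → ℝ :=
  ![x 0, x 1, x 2 * Real.cos α - x 3 * Real.sin α, x 2 * Real.sin α + x 3 * Real.cos α]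

/-- The partial derivative `∂_{x_j} f` of a scalar function on `ℝ⁴`. -/
noncomputable def pd (j : Fin 4) (f : (Fin 4 → ℝ) → ℝ) (x : Fin 4 → ℝ) : ℝ :=
  fderiv ℝ f x (Pi.single j 1)

/-!
Write `ω = ω^{1,3}` and `R_α` for the rotation in the `(x₁,x₂)`-plane. Differentiating
`u ∘ R_α = R_α ∘ u` gives `ω(R_α x) = cos α · ω(x) − sin α · ω^{2,3}(x)`, and `ω^{2,3}` vanishes
on `{x₂ = 0, x₁ ≠ 0}`: `u²` vanishes there by swirl-freeness and `u³` is invariant under `R_α`.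
Rotating `x` to `(r, 0, x₃, x₄)` gives `r ω(x) = x₁ ω(r, 0, x₃, x₄)`; conjugating `u` by the
exchange of the two planes gives the same in the `(x₃,x₄)`-plane, so
`r s ω(x) = x₁ x₃ ω(r, 0, s, 0)`. The rotations by `π` make `ω` vanish on the `x₁`- and
`x₃`-axes, so bounds on `Dω` and `D²ω` give `|ω(r, 0, s, 0)| ≲ min(r, s, r s)`.
-/

section Calculus

variable {E G : Type*} [NormedAddCommGroup E] [NormedSpace ℝ E]
  [NormedAddCommGroup G] [NormedSpace ℝ G] {f : E → G} {x v : E}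

theorem fderiv_apply_eq_zero_of_forall_add_smul_eq (hf : DifferentiableAt ℝ f x)
    (h : ∀ t : ℝ, f (x + t • v) = f x) : fderiv ℝ f x v = 0 := by
  rw [← hf.lineDeriv_eq_fderiv, lineDeriv, funext h, deriv_const]

theorem fderiv_apply_eq_zero_of_forall_add_smul_eq_sub_smul (hf : DifferentiableAt ℝ f x)
    (h : ∀ t : ℝ, f (x + t • v) = f (x - t • v)) : fderiv ℝ f x v = 0 := by
  have hsymm : lineDeriv ℝ f x (-v) = lineDeriv ℝ f x v := by
    simp only [lineDeriv, smul_neg, ← sub_eq_add_neg, ← h]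
  rw [lineDeriv_neg, neg_eq_iff_add_eq_zero, ← two_smul ℝ, smul_eq_zero] at hsymm
  rw [← hf.lineDeriv_eq_fderiv]
  exact hsymm.resolve_left two_ne_zero

theorem fderiv_apply_eq_zero_of_forall_comp_eq {γ : ℝ → E} (hγ₀ : γ 0 = x)
    (hf : DifferentiableAt ℝ f x) (hγ : HasDerivAt γ v 0) (h : ∀ t, f (γ t) = f x) :
    fderiv ℝ f x v = 0 := by
  subst hγ₀
  have hcomp := hf.hasFDerivAt.comp_hasDerivAt 0 hγ
  rw [show f ∘ γ = fun _ => f (γ 0) from funext h] at hcomp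
  exact hcomp.unique (hasDerivAt_const 0 _)

theorem fderiv_apply_map_of_forall_comp_eq {u : E → G} {L : E →L[ℝ] E} {L' : G →L[ℝ] G}
    (hu : Differentiable ℝ u) (h : ∀ x, u (L x) = L' (u x)) (x v : E) :
    fderiv ℝ u (L x) (L v) = L' (fderiv ℝ u x v) := by
  have h₁ := (hu (L x)).hasFDerivAt.comp x L.hasFDerivAt
  rw [show u ∘ L = L' ∘ u from funext h] at h₁
  have h₂ := L'.hasFDerivAt.comp x (hu x).hasFDerivAt
  exact congrArg (· v) (h₁.unique h₂)

theorem fderiv_apply_apply {ι : Type*} [Fintype ι] {u : E → ι → ℝ} (hu : DifferentiableAt ℝ u x)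
    (v : E) (i : ι) : fderiv ℝ u x v i = fderiv ℝ (fun y => u y i) x v := by
  rw [fderiv_apply hu]
  rfl

end Calculus

section VanishingOnTwoLines

variable {E G : Type*} [NormedAddCommGroup E] [NormedSpace ℝ E]
  [NormedAddCommGroup G] [NormedSpace ℝ G] {F : E → G} {a b : E} {M₁ M₂ : ℝ}

theorem norm_le_mul_abs_mul_abs_of_forall_smul_eq_zero (hF : ContDiff ℝ 2 F)
    (h₂ : ∀ x, ‖iteratedFDeriv ℝ 2 F x‖ ≤ M₂) (ha : ∀ t : ℝ, F (t • a) = 0)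
    (hb : ∀ t : ℝ, F (t • b) = 0) (r s : ℝ) :
    ‖F (r • a + s • b)‖ ≤ M₂ * ‖a‖ * ‖b‖ * (|r| * |s|) := by
  have hdF : Differentiable ℝ F := hF.differentiable (by norm_num)
  have hddF : Differentiable ℝ (fderiv ℝ F) :=
    (hF.fderiv_right (m := 1) (by norm_num)).differentiable (by norm_num)
  have hLip : ∀ y z, ‖fderiv ℝ F y - fderiv ℝ F z‖ ≤ M₂ * ‖y - z‖ := fun y z =>
    convex_univ.norm_image_sub_le_of_norm_fderiv_le (fun w _ => hddF w)
      (fun w _ => by simpa [← norm_iteratedFDeriv_fderiv] using h₂ w) trivial trivial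
  have hdirection : ∀ t : ℝ, fderiv ℝ F (t • a) a = 0 := fun t =>
    fderiv_apply_eq_zero_of_forall_add_smul_eq (hdF _) fun τ => by rw [← add_smul, ha, ha]
  have hderiv : ∀ t : ℝ,
      HasDerivAt (fun t : ℝ => F (t • a + s • b)) (fderiv ℝ F (t • a + s • b) a) t := by
    intro t
    simpa [Function.comp_def] using
      (hdF _).hasFDerivAt.comp_hasDerivAt t (((hasDerivAt_id t).smul_const a).add_const (s • b))
  have hbound : ∀ t : ℝ, ‖fderiv ℝ F (t • a + s • b) a‖ ≤ M₂ * ‖a‖ * ‖b‖ * |s| := by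
    intro t
    calc ‖fderiv ℝ F (t • a + s • b) a‖
        = ‖(fderiv ℝ F (t • a + s • b) - fderiv ℝ F (t • a)) a‖ := by simp [hdirection]
      _ ≤ ‖fderiv ℝ F (t • a + s • b) - fderiv ℝ F (t • a)‖ * ‖a‖ :=
          ContinuousLinearMap.le_opNorm _ a
      _ ≤ M₂ * ‖s • b‖ * ‖a‖ := by
          gcongr
          simpa using hLip (t • a + s • b) (t • a)
      _ = M₂ * ‖a‖ * ‖b‖ * |s| := by rw [norm_smul, Real.norm_eq_abs]; ring
  have := convex_univ.norm_image_sub_le_of_norm_deriv_le (fun t _ => (hderiv t).differentiableAt)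
    (fun t _ => (hderiv t).deriv ▸ hbound t) (Set.mem_univ 0) (Set.mem_univ r)
  simpa [hb, Real.norm_eq_abs, mul_comm, mul_assoc, mul_left_comm] using this

theorem one_add_abs_add_abs_mul_norm_le_of_forall_smul_eq_zero (hF : ContDiff ℝ 2 F)
    (h₁ : ∀ x, ‖iteratedFDeriv ℝ 1 F x‖ ≤ M₁) (h₂ : ∀ x, ‖iteratedFDeriv ℝ 2 F x‖ ≤ M₂)
    (ha : ∀ t : ℝ, F (t • a) = 0) (hb : ∀ t : ℝ, F (t • b) = 0) (r s : ℝ) :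
    (1 + |r| + |s|) * ‖F (r • a + s • b)‖
      ≤ (M₂ * ‖a‖ * ‖b‖ + M₁ * (‖a‖ + ‖b‖)) * (|r| * |s|) := by
  have hLip : ∀ y z, ‖F y - F z‖ ≤ M₁ * ‖y - z‖ := fun y z =>
    convex_univ.norm_image_sub_le_of_norm_fderiv_le (fun w _ => hF.differentiable (by norm_num) w)
      (fun w _ => by simpa using h₁ w) trivial trivial
  have hnear_a : ‖F (r • a + s • b)‖ ≤ M₁ * (|s| * ‖b‖) := by
    simpa [ha, norm_smul] using hLip (r • a + s • b) (r • a)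
  have hnear_b : ‖F (r • a + s • b)‖ ≤ M₁ * (|r| * ‖a‖) := by
    simpa [hb, norm_smul] using hLip (r • a + s • b) (s • b)
  have hmixed := norm_le_mul_abs_mul_abs_of_forall_smul_eq_zero hF h₂ ha hb r s
  nlinarith [mul_le_mul_of_nonneg_left hnear_a (abs_nonneg r),
    mul_le_mul_of_nonneg_left hnear_b (abs_nonneg s)]

end VanishingOnTwoLines

local notation "ℝ⁴" => Fin 4 → ℝ

namespace BiRotational

noncomputable def skewEntry (i j : Fin 4) : (ℝ⁴ →L[ℝ] ℝ⁴) →L[ℝ] ℝ :=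
  (ContinuousLinearMap.proj i).comp (ContinuousLinearMap.apply ℝ ℝ⁴ (Pi.single j 1)) -
    (ContinuousLinearMap.proj j).comp (ContinuousLinearMap.apply ℝ ℝ⁴ (Pi.single i 1))

/-- Indices are 0-based: `vorticity 0 2 u` is the paper's `ω^{1,3} = ∂₃u¹ − ∂₁u³`. -/
noncomputable def vorticity (i j : Fin 4) (u : ℝ⁴ → ℝ⁴) (x : ℝ⁴) : ℝ :=
  skewEntry i j (fderiv ℝ u x)

theorem vorticity_apply (i j : Fin 4) (u : ℝ⁴ → ℝ⁴) (x : ℝ⁴) :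
    vorticity i j u x = fderiv ℝ u x (Pi.single j 1) i - fderiv ℝ u x (Pi.single i 1) j :=
  rfl

theorem vorticity_eq_pd_sub_pd {u : ℝ⁴ → ℝ⁴} {x : ℝ⁴} (hu : DifferentiableAt ℝ u x) (i j : Fin 4) :
    vorticity i j u x = pd j (fun y => u y i) x - pd i (fun y => u y j) x := by
  rw [vorticity_apply, fderiv_apply_apply hu, fderiv_apply_apply hu]
  rfl

section Regularity

variable {u : ℝ⁴ → ℝ⁴} {n : WithTop ℕ∞}

theorem contDiff_vorticity (hu : ContDiff ℝ (n + 1) u) (i j : Fin 4) :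
    ContDiff ℝ n (vorticity i j u) :=
  (skewEntry i j).contDiff.comp (hu.fderiv_right le_rfl)

theorem norm_iteratedFDeriv_vorticity_le (hu : ContDiff ℝ (n + 1) u) (i j : Fin 4) {k : ℕ}
    (hk : k ≤ n) (x : ℝ⁴) :
    ‖iteratedFDeriv ℝ k (vorticity i j u) x‖
      ≤ ‖skewEntry i j‖ * ‖iteratedFDeriv ℝ (k + 1) u x‖ := by
  rw [← norm_iteratedFDeriv_fderiv]
  exact (skewEntry i j).norm_iteratedFDeriv_comp_left (hu.fderiv_right le_rfl).contDiffAt hk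

end Regularity

noncomputable def rot12CLM (α : ℝ) : ℝ⁴ →L[ℝ] ℝ⁴ :=
  LinearMap.toContinuousLinearMap
    { toFun := rot12 α
      map_add' := fun x y => by ext i; fin_cases i <;> simp [rot12] <;> ring
      map_smul' := fun c x => by ext i; fin_cases i <;> simp [rot12] <;> ring }

@[simp] theorem rot12CLM_apply (α : ℝ) (x : ℝ⁴) : rot12CLM α x = rot12 α x := rfl

theorem hasDerivAt_rot12 (x : ℝ⁴) : HasDerivAt (fun α => rot12 α x) ![-x 1, x 0, 0, 0] 0 := by
  refine hasDerivAt_pi.2 fun i => ?_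
  fin_cases i
  · simpa [rot12] using ((hasDerivAt_cos 0).const_mul (x 0)).fun_sub
      ((hasDerivAt_sin 0).const_mul (x 1))
  · simpa [rot12] using ((hasDerivAt_sin 0).const_mul (x 0)).fun_add
      ((hasDerivAt_cos 0).const_mul (x 1))
  · exact hasDerivAt_const 0 (x 2)
  · exact hasDerivAt_const 0 (x 3)

theorem rot12_pi (x : ℝ⁴) : rot12 π x = ![-x 0, -x 1, x 2, x 3] := by
  ext i; fin_cases i <;> simp [rot12]

theorem exists_rot12_eq (x : ℝ⁴) : ∃ α, rot12 α ![rx x, 0, x 2, x 3] = x ∧ rx x * cos α = x 0 := by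
  refine ⟨Complex.arg (x 0 + x 1 * Complex.I), ?_, ?_⟩
  · have hcos := Complex.norm_mul_cos_arg (x 0 + x 1 * Complex.I)
    have hsin := Complex.norm_mul_sin_arg (x 0 + x 1 * Complex.I)
    rw [Complex.norm_add_mul_I] at hcos hsin
    ext i; fin_cases i <;> simp_all [rot12, rx]
  · simpa [rx, Complex.norm_add_mul_I] using Complex.norm_mul_cos_arg (x 0 + x 1 * Complex.I)

section Rot12

variable {u : ℝ⁴ → ℝ⁴} (hu : Differentiable ℝ u)
  (hsym : ∀ α x, u (rot12 α x) = rot12 α (u x))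

include hu hsym in
theorem vorticity_zero_two_rot12 (α : ℝ) (x : ℝ⁴) :
    vorticity 0 2 u (rot12 α x) = cos α * vorticity 0 2 u x - sin α * vorticity 1 2 u x := by
  have key := fderiv_apply_map_of_forall_comp_eq (L := rot12CLM α) (L' := rot12CLM α) hu (hsym α) x
  have h₂ : rot12CLM α (Pi.single 2 1) = Pi.single 2 1 := by
    ext i; fin_cases i <;> simp [rot12]
  have h₀ : rot12CLM α (cos α • Pi.single 0 1 - sin α • Pi.single 1 1) = Pi.single 0 1 := by
    ext i; fin_cases i <;> simp [rot12] <;> nlinarith [cos_sq_add_sin_sq α]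
  have e₂ := key (Pi.single 2 1)
  have e₀ := key (cos α • Pi.single 0 1 - sin α • Pi.single 1 1)
  rw [h₂] at e₂
  rw [h₀] at e₀
  simp only [vorticity_apply, ← rot12CLM_apply, e₂, e₀]
  simp [rot12]
  ring

theorem apply_one_eq_zero (hswirl : ∀ x, x 1 * u x 0 = x 0 * u x 1) {x : ℝ⁴} (h₁ : x 1 = 0)
    (h₀ : x 0 ≠ 0) : u x 1 = 0 := by
  simpa [h₁, h₀] using (hswirl x).symm

include hu hsym in
theorem vorticity_one_two_eq_zero (hswirl : ∀ x, x 1 * u x 0 = x 0 * u x 1) {x : ℝ⁴}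
    (h₁ : x 1 = 0) (h₀ : x 0 ≠ 0) : vorticity 1 2 u x = 0 := by
  have hu₁ : fderiv ℝ (fun y => u y 1) x (Pi.single 2 1) = 0 :=
    fderiv_apply_eq_zero_of_forall_add_smul_eq (differentiableAt_pi.1 (hu x) _) fun t => by
      rw [apply_one_eq_zero hswirl (by simp [h₁]) (by simpa using h₀),
        apply_one_eq_zero hswirl h₁ h₀]
  have hu₂ : x 0 * fderiv ℝ (fun y => u y 2) x (Pi.single 1 1) = 0 := by
    have hgen : (![-x 1, x 0, 0, 0] : ℝ⁴) = x 0 • Pi.single 1 1 := by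
      ext i; fin_cases i <;> simp [h₁]
    rw [← smul_eq_mul, ← map_smul, ← hgen]
    refine fderiv_apply_eq_zero_of_forall_comp_eq (by ext i; fin_cases i <;> simp [rot12])
      (differentiableAt_pi.1 (hu x) _) (hasDerivAt_rot12 x) fun α => ?_
    rw [hsym]
    rfl
  rw [vorticity_apply, fderiv_apply_apply (hu x), fderiv_apply_apply (hu x), hu₁,
    (mul_eq_zero.1 hu₂).resolve_left h₀, sub_zero]

include hu hsym in
theorem rx_mul_vorticity_zero_two (hswirl : ∀ x, x 1 * u x 0 = x 0 * u x 1) {x : ℝ⁴}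
    (h₀ : x 0 ≠ 0) : rx x * vorticity 0 2 u x = x 0 * vorticity 0 2 u ![rx x, 0, x 2, x 3] := by
  obtain ⟨α, hrot, hcos⟩ := exists_rot12_eq x
  have hrx : rx x ≠ 0 := (sqrt_pos.2 (by positivity)).ne'
  have h := vorticity_zero_two_rot12 hu hsym α ![rx x, 0, x 2, x 3]
  rw [hrot, vorticity_one_two_eq_zero hu hsym hswirl rfl hrx] at h
  rw [h, ← hcos]
  ring

include hsym in
theorem apply_zero_eq_zero {x : ℝ⁴} (h₀ : x 0 = 0) (h₁ : x 1 = 0) : u x 0 = 0 := by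
  have hfix : rot12 π x = x := by
    ext i; fin_cases i <;> simp [rot12_pi, h₀, h₁]
  have h := congrFun (hsym π x) 0
  rw [hfix, rot12_pi] at h
  simp only [Matrix.cons_val_zero] at h
  linarith

include hu hsym in
theorem vorticity_zero_two_eq_zero {x : ℝ⁴} (h₀ : x 0 = 0) (h₁ : x 1 = 0) :
    vorticity 0 2 u x = 0 := by
  have hu₀ : fderiv ℝ (fun y => u y 0) x (Pi.single 2 1) = 0 := by
    refine fderiv_apply_eq_zero_of_forall_add_smul_eq (differentiableAt_pi.1 (hu x) _) fun t => ?_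
    rw [apply_zero_eq_zero hsym h₀ h₁, apply_zero_eq_zero hsym (by simp [h₀]) (by simp [h₁])]
  have hu₂ : fderiv ℝ (fun y => u y 2) x (Pi.single 0 1) = 0 := by
    refine fderiv_apply_eq_zero_of_forall_add_smul_eq_sub_smul
      (differentiableAt_pi.1 (hu x) _) fun t => ?_
    have hflip : rot12 π (x + t • Pi.single 0 1) = x - t • Pi.single 0 1 := by
      ext i; fin_cases i <;> simp [rot12_pi, h₀, h₁]
    rw [← hflip, hsym]
    rfl
  rw [vorticity_apply, fderiv_apply_apply (hu x), fderiv_apply_apply (hu x), hu₀, hu₂, sub_zero]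

end Rot12

noncomputable def swapPlanes : ℝ⁴ →L[ℝ] ℝ⁴ :=
  (LinearMap.funLeft ℝ ℝ ![2, 3, 0, 1]).toContinuousLinearMap

theorem swapPlanes_apply (x : ℝ⁴) : swapPlanes x = ![x 2, x 3, x 0, x 1] := by
  ext i; fin_cases i <;> rfl

theorem swapPlanes_swapPlanes (x : ℝ⁴) : swapPlanes (swapPlanes x) = x := by
  ext i; fin_cases i <;> rfl

theorem swapPlanes_rot12 (α : ℝ) (x : ℝ⁴) : swapPlanes (rot12 α x) = rot34 α (swapPlanes x) := by
  ext i; fin_cases i <;> rfl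

theorem swapPlanes_rot34 (α : ℝ) (x : ℝ⁴) : swapPlanes (rot34 α x) = rot12 α (swapPlanes x) := by
  ext i; fin_cases i <;> rfl

section SwapPlanes

variable {u : ℝ⁴ → ℝ⁴}

theorem vorticity_zero_two_swapPlanes_conj (hu : Differentiable ℝ u) (x : ℝ⁴) :
    vorticity 0 2 (swapPlanes ∘ u ∘ swapPlanes) (swapPlanes x) = -vorticity 0 2 u x := by
  have h := swapPlanes.hasFDerivAt.comp _
    ((hu (swapPlanes (swapPlanes x))).hasFDerivAt.comp _ swapPlanes.hasFDerivAt)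
  have he₀ : swapPlanes (Pi.single 0 1) = Pi.single 2 1 := by ext i; fin_cases i <;> rfl
  have he₂ : swapPlanes (Pi.single 2 1) = Pi.single 0 1 := by ext i; fin_cases i <;> rfl
  rw [vorticity_apply, vorticity_apply, h.fderiv, swapPlanes_swapPlanes]
  simp only [ContinuousLinearMap.comp_apply, he₀, he₂, swapPlanes_apply]
  simp

theorem differentiable_swapPlanes_conj (hu : Differentiable ℝ u) :
    Differentiable ℝ (swapPlanes ∘ u ∘ swapPlanes) :=
  swapPlanes.differentiable.comp (hu.comp swapPlanes.differentiable)

theorem swapPlanes_conj_rot12 (hsym : ∀ α x, u (rot34 α x) = rot34 α (u x)) (α : ℝ) (x : ℝ⁴) :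
    (swapPlanes ∘ u ∘ swapPlanes) (rot12 α x) = rot12 α ((swapPlanes ∘ u ∘ swapPlanes) x) := by
  simp only [Function.comp_apply, swapPlanes_rot12, hsym, swapPlanes_rot34]

theorem swapPlanes_conj_swirl (hswirl : ∀ x, x 3 * u x 2 = x 2 * u x 3) (x : ℝ⁴) :
    x 1 * (swapPlanes ∘ u ∘ swapPlanes) x 0 = x 0 * (swapPlanes ∘ u ∘ swapPlanes) x 1 := by
  simpa [swapPlanes_apply] using hswirl (swapPlanes x)

end SwapPlanes

section Rot34

variable {u : ℝ⁴ → ℝ⁴} (hu : Differentiable ℝ u)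
  (hsym : ∀ α x, u (rot34 α x) = rot34 α (u x))

include hu hsym in
theorem vorticity_zero_two_eq_zero_of_two_three {x : ℝ⁴} (h₂ : x 2 = 0) (h₃ : x 3 = 0) :
    vorticity 0 2 u x = 0 := by
  have h := vorticity_zero_two_eq_zero (differentiable_swapPlanes_conj hu)
    (swapPlanes_conj_rot12 hsym) (x := swapPlanes x) (by simp [swapPlanes_apply, h₂])
    (by simp [swapPlanes_apply, h₃])
  rwa [vorticity_zero_two_swapPlanes_conj hu, neg_eq_zero] at h

include hu hsym in
theorem sx_mul_vorticity_zero_two (hswirl : ∀ x, x 3 * u x 2 = x 2 * u x 3) {x : ℝ⁴}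
    (h₂ : x 2 ≠ 0) : sx x * vorticity 0 2 u x = x 2 * vorticity 0 2 u ![x 0, x 1, sx x, 0] := by
  have h := rx_mul_vorticity_zero_two (differentiable_swapPlanes_conj hu)
    (swapPlanes_conj_rot12 hsym) (swapPlanes_conj_swirl hswirl) (x := swapPlanes x)
    (by simpa [swapPlanes_apply] using h₂)
  have hrx : rx (swapPlanes x) = sx x := by simp [rx, sx, swapPlanes_apply]
  have hp : ![sx x, 0, swapPlanes x 2, swapPlanes x 3] = swapPlanes ![x 0, x 1, sx x, 0] := by
    ext i; fin_cases i <;> rfl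
  rw [hrx, hp, vorticity_zero_two_swapPlanes_conj hu, vorticity_zero_two_swapPlanes_conj hu] at h
  simpa [swapPlanes_apply] using h

end Rot34

theorem rx_mul_sx_mul_vorticity_zero_two {u : ℝ⁴ → ℝ⁴} (hu : Differentiable ℝ u)
    (hsym₁₂ : ∀ α x, u (rot12 α x) = rot12 α (u x)) (hsym₃₄ : ∀ α x, u (rot34 α x) = rot34 α (u x))
    (hswirl₁₂ : ∀ x, x 1 * u x 0 = x 0 * u x 1) (hswirl₃₄ : ∀ x, x 3 * u x 2 = x 2 * u x 3)
    {x : ℝ⁴} (h₀ : x 0 ≠ 0) (h₂ : x 2 ≠ 0) :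
    rx x * sx x * vorticity 0 2 u x
      = x 0 * x 2 * vorticity 0 2 u (rx x • Pi.single 0 1 + sx x • Pi.single 2 1) := by
  have h₁₂ := rx_mul_vorticity_zero_two hu hsym₁₂ hswirl₁₂ h₀
  have h₃₄ := sx_mul_vorticity_zero_two hu hsym₃₄ hswirl₃₄ (x := ![rx x, 0, x 2, x 3]) h₂
  have hp : ![rx x, 0, sx x, 0] = rx x • Pi.single 0 1 + sx x • Pi.single 2 1 := by
    ext i; fin_cases i <;> simp
  simp only [sx, Matrix.cons_val] at h₃₄
  rw [← sx, hp] at h₃₄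
  linear_combination sx x * h₁₂ + x 0 * h₃₄

theorem one_add_rx_add_sx_mul_abs_vorticity_le {u : ℝ⁴ → ℝ⁴} (hu : Differentiable ℝ u)
    (hsym₁₂ : ∀ α x, u (rot12 α x) = rot12 α (u x)) (hsym₃₄ : ∀ α x, u (rot34 α x) = rot34 α (u x))
    (hswirl₁₂ : ∀ x, x 1 * u x 0 = x 0 * u x 1) (hswirl₃₄ : ∀ x, x 3 * u x 2 = x 2 * u x 3)
    {K : ℝ} (hslice : ∀ r s : ℝ, 0 < r → 0 < s →
      (1 + r + s) * |vorticity 0 2 u (r • Pi.single 0 1 + s • Pi.single 2 1)| ≤ K * (r * s))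
    {x : ℝ⁴} (hx : x 0 * x 2 ≠ 0) :
    (1 + rx x + sx x) * |vorticity 0 2 u x| ≤ K * |x 0 * x 2| := by
  have h₀ : x 0 ≠ 0 := left_ne_zero_of_mul hx
  have h₂ : x 2 ≠ 0 := right_ne_zero_of_mul hx
  have hr : 0 < rx x := sqrt_pos.2 (by positivity)
  have hs : 0 < sx x := sqrt_pos.2 (by positivity)
  have hfac :=
    congrArg abs (rx_mul_sx_mul_vorticity_zero_two hu hsym₁₂ hsym₃₄ hswirl₁₂ hswirl₃₄ h₀ h₂)
  rw [abs_mul, abs_mul (x 0 * x 2), abs_of_pos (mul_pos hr hs)] at hfac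
  refine le_of_mul_le_mul_right ?_ (mul_pos hr hs)
  calc (1 + rx x + sx x) * |vorticity 0 2 u x| * (rx x * sx x)
      = |x 0 * x 2| * ((1 + rx x + sx x)
          * |vorticity 0 2 u (rx x • Pi.single 0 1 + sx x • Pi.single 2 1)|) := by
        linear_combination (1 + rx x + sx x) * hfac
    _ ≤ |x 0 * x 2| * (K * (rx x * sx x)) := by grw [hslice _ _ hr hs]
    _ = K * |x 0 * x 2| * (rx x * sx x) := by ring

end BiRotational

/-- Let `u : ℝ⁴ → ℝ⁴` be `C³` with all partial derivatives up to order 3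
bounded, bi-rotationally symmetric and swirl-free.  Let
`ω^{1,3} = ∂_{x₃} u¹ − ∂_{x₁} u³`.  Then the supremum over `{x : x₁ x₃ ≠ 0}` of
`(1 + r_x + s_x)|ω^{1,3}(x)|/|x₁ x₃|` is finite. -/
theorem stmt_13 (u : (Fin 4 → ℝ) → (Fin 4 → ℝ))
    (hreg : ContDiff ℝ 3 u)
    (hbdd : ∀ i : ℕ, i ≤ 3 → ∃ C : ℝ, ∀ x, ‖iteratedFDeriv ℝ i u x‖ ≤ C)
    (hsym12 : ∀ α : ℝ, ∀ x, u (rot12 α x) = rot12 α (u x))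
    (hsym34 : ∀ α : ℝ, ∀ x, u (rot34 α x) = rot34 α (u x))
    (hswirl12 : ∀ x, x 1 * u x 0 = x 0 * u x 1)
    (hswirl34 : ∀ x, x 3 * u x 2 = x 2 * u x 3) :
    ∃ C : ℝ, ∀ x : Fin 4 → ℝ, x 0 * x 2 ≠ 0 →
      (1 + rx x + sx x) *
        |pd 2 (fun y => u y 0) x - pd 0 (fun y => u y 2) x| / |x 0 * x 2| ≤ C := by
  open BiRotational in
  have hu : Differentiable ℝ u := hreg.differentiable (by norm_num)
  obtain ⟨C₂, hC₂⟩ := hbdd 2 (by norm_num)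
  obtain ⟨C₃, hC₃⟩ := hbdd 3 le_rfl
  have hD₁ : ∀ x, ‖iteratedFDeriv ℝ 1 (vorticity 0 2 u) x‖ ≤ ‖skewEntry 0 2‖ * C₂ := fun x =>
    (norm_iteratedFDeriv_vorticity_le (n := 2) hreg 0 2 (by norm_num) x).trans
      (by gcongr; exact hC₂ x)
  have hD₂ : ∀ x, ‖iteratedFDeriv ℝ 2 (vorticity 0 2 u) x‖ ≤ ‖skewEntry 0 2‖ * C₃ := fun x =>
    (norm_iteratedFDeriv_vorticity_le (n := 2) hreg 0 2 (by norm_num) x).trans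
      (by gcongr; exact hC₃ x)
  have hslice := one_add_abs_add_abs_mul_norm_le_of_forall_smul_eq_zero
    (a := Pi.single 0 1) (b := Pi.single 2 1) (contDiff_vorticity (n := 2) hreg 0 2) hD₁ hD₂
    (fun t => vorticity_zero_two_eq_zero_of_two_three hu hsym34 (by simp) (by simp))
    (fun t => vorticity_zero_two_eq_zero hu hsym12 (by simp) (by simp))
  simp only [Pi.norm_single, norm_one, mul_one, one_add_one_eq_two, Real.norm_eq_abs] at hslice
  refine ⟨‖skewEntry 0 2‖ * C₃ + ‖skewEntry 0 2‖ * C₂ * 2, fun x hx => ?_⟩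
  rw [← vorticity_eq_pd_sub_pd (hu x), div_le_iff₀ (abs_pos.2 hx)]
  refine one_add_rx_add_sx_mul_abs_vorticity_le hu hsym12 hsym34 hswirl12 hswirl34
    (fun r s hr hs => ?_) hx
  simpa [abs_of_pos hr, abs_of_pos hs] using hslice r s
end
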